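/- arXiv:1311.3737 — 9 statements merged into one kernel-verified Lean document; each statement's English description precedes it below -/
import Mathlib

section
/- Let Λ₋, Λ₊ : ℝ → ℝ be C¹ with Λ₋(x) < Λ₊(x) for all x, and let λ₋, λ₊ : [0,T) × ℝ → ℝ be a C¹ solution of the diagonal system (∗) with λ₋(0,·) = Λ₋, λ₊(0,·) = Λ₊ and with λ₋(t,x) < λ₊(t,x) on [0,T) × ℝ. Fix α ≤ β, let x⁻(·,α) be the C¹ solution of dx/dt = λ₊(t,x), x(0) = α, and x⁺(·,β) the C¹ solution of dx/dt = λ₋(t,x), x(0) = β, both defined on [0,t*] with 0 ≤ t* < T. If x⁻(t*,α) = x⁺(t*,β), then t* = ∫_α^β dζ/(Λ₊(ζ) − Λ₋(ζ)) and x⁻(t*,α) = ½[α + β + ∫_α^β (Λ₊(ζ) + Λ₋(ζ))/(Λ₊(ζ) − Λ₋(ζ)) dζ]. -/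
/-!
Both `1 / (λ₊ - λ₋)` and `(λ₊ + λ₋) / (λ₊ - λ₋)` are conserved densities of the diagonal
system, with fluxes `(λ₊ + λ₋) / (2 (λ₊ - λ₋))` and `2 λ₋ λ₊ / (λ₊ - λ₋)`. When the interval
`[x⁻(t), x⁺(t)]` moves with the characteristic speeds `λ₊` and `λ₋`, the integral of a conserved
density over it changes only through the relative fluxes at its ends; for these two densities they
add up to `-1` and to `-(λ₊(t, x⁻) + λ₋(t, x⁺))`. Hence `t + ∫_{x⁻}^{x⁺} dy / (λ₊ - λ₋)` and
`x⁻ + x⁺ + ∫_{x⁻}^{x⁺} (λ₊ + λ₋) / (λ₊ - λ₋) dy` are constant in `t`; compare `t = 0`, where the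
interval is `[α, β]`, with `t = t*`, where it is a single point.
-/

open Set Topology MeasureTheory

section Calculus

variable {E : Type*} [NormedAddCommGroup E] [NormedSpace ℝ E]

theorem HasFDerivAt.hasDerivAt_comp_prodMk_left {f : ℝ × ℝ → E} {f' : ℝ × ℝ →L[ℝ] E} {t x : ℝ}
    (h : HasFDerivAt f f' (t, x)) : HasDerivAt (fun s => f (s, x)) (f' (1, 0)) t :=
  h.comp_hasDerivAt t ((hasDerivAt_id t).prodMk (hasDerivAt_const t x))

theorem HasFDerivAt.hasDerivAt_comp_prodMk_right {f : ℝ × ℝ → E} {f' : ℝ × ℝ →L[ℝ] E} {t x : ℝ}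
    (h : HasFDerivAt f f' (t, x)) : HasDerivAt (fun y => f (t, y)) (f' (0, 1)) x :=
  h.comp_hasDerivAt x ((hasDerivAt_const x t).prodMk (hasDerivAt_id x))

theorem ContinuousLinearMap.apply_prod_eq (L : ℝ × ℝ →L[ℝ] E) (u v : ℝ) :
    L (u, v) = u • L (1, 0) + v • L (0, 1) := by
  rw [← map_smul, ← map_smul, ← map_add]
  simp

theorem hasDerivAt_intervalIntegral_of_continuousOn {F F' : ℝ → ℝ → E} {U : Set ℝ} {t₀ : ℝ}
    (hU : U ∈ 𝓝 t₀) (hF : ∀ t ∈ U, Continuous (F t))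
    (hF' : ContinuousOn (Function.uncurry F') (U ×ˢ univ))
    (hFF' : ∀ t ∈ U, ∀ σ, HasDerivAt (F · σ) (F' t σ) t) (a b : ℝ) :
    HasDerivAt (fun t => ∫ σ in a..b, F t σ) (∫ σ in a..b, F' t₀ σ) t₀ := by
  obtain ⟨ε, hε, hball⟩ := Metric.nhds_basis_closedBall.mem_iff.mp hU
  obtain ⟨C, hC⟩ := ((isCompact_closedBall t₀ ε).prod isCompact_uIcc).exists_bound_of_continuousOn
    (hF'.mono (prod_mono hball (subset_univ (uIcc a b))))
  have hF't₀ : Continuous (F' t₀) :=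
    hF'.comp_continuous (Continuous.prodMk_right t₀) fun _ => ⟨mem_of_mem_nhds hU, trivial⟩
  refine (intervalIntegral.hasDerivAt_integral_of_dominated_loc_of_deriv_le (bound := fun _ => C)
    (Metric.ball_mem_nhds t₀ hε) ?_ ((hF t₀ (mem_of_mem_nhds hU)).intervalIntegrable a b)
    hF't₀.aestronglyMeasurable ?_ intervalIntegrable_const ?_).2
  · filter_upwards [hU] with t ht using (hF t ht).aestronglyMeasurable
  · exact ae_of_all _ fun σ hσ t ht =>
      hC (t, σ) ⟨Metric.ball_subset_closedBall ht, uIoc_subset_uIcc hσ⟩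
  · exact ae_of_all _ fun σ _ t ht => hFF' t (hball (Metric.ball_subset_closedBall ht)) σ

theorem continuousOn_parametric_intervalIntegral_of_continuousOn {X : Type*}
    [TopologicalSpace X] {s : Set X} {P : X × ℝ → E} {a b : X → ℝ}
    (hP : ContinuousOn P (s ×ˢ univ)) (ha : ContinuousOn a s) (hb : ContinuousOn b s) :
    ContinuousOn (fun t => ∫ y in a t..b t, P (t, y)) s := by
  rw [continuousOn_iff_continuous_domRestrict]
  have hPs : Continuous (Function.uncurry fun (t : s) y => P (t, y)) :=
    hP.comp_continuous (by fun_prop) fun q => ⟨q.1.2, trivial⟩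
  have hint (t : s) (u v : ℝ) : IntervalIntegrable (fun y => P (t, y)) volume u v :=
    (hPs.uncurry_left t).intervalIntegrable u v
  have hprim (c : s → ℝ) (hc : Continuous c) :=
    intervalIntegral.continuous_parametric_intervalIntegral_of_continuous (μ := volume) (a₀ := 0)
      hPs hc
  convert (hprim _ hb.domRestrict).sub (hprim _ ha.domRestrict) using 1
  funext t
  exact (intervalIntegral.integral_interval_sub_left (hint t _ _) (hint t _ _)).symm

theorem eq_of_hasDerivAt_zero_of_continuousOn {f : ℝ → ℝ} {a b : ℝ} (hab : a ≤ b)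
    (hf' : ∀ t ∈ Ioo a b, HasDerivAt f 0 t) (hf : ContinuousOn f (Icc a b)) : f b = f a := by
  obtain rfl | hab := hab.eq_or_lt
  · rfl
  obtain ⟨c, hc, hslope⟩ := exists_hasDerivAt_eq_slope f (fun _ => 0) hab hf hf'
  rw [eq_comm, div_eq_zero_iff] at hslope
  exact sub_eq_zero.mp (hslope.resolve_right (sub_ne_zero.mpr hab.ne'))

theorem ContDiffOn.differentiableAt_of_mem_prod_univ {s : Set ℝ} {f : ℝ × ℝ → ℝ}
    (hf : ContDiffOn ℝ 1 f (s ×ˢ univ)) (hs : IsOpen s) {t : ℝ} (ht : t ∈ s) (x : ℝ) :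
    DifferentiableAt ℝ f (t, x) :=
  (hf.contDiffAt ((hs.prod isOpen_univ).mem_nhds (mk_mem_prod ht (mem_univ x)))).differentiableAt
    one_ne_zero

theorem hasDerivAt_integral_comp_segment {s : Set ℝ} (hs : IsOpen s) {P : ℝ × ℝ → ℝ}
    (hP : ContDiffOn ℝ 1 P (s ×ˢ univ)) {a b a' b' : ℝ → ℝ}
    (ha : ∀ t ∈ s, HasDerivAt a (a' t) t) (hb : ∀ t ∈ s, HasDerivAt b (b' t) t)
    (ha' : ContinuousOn a' s) (hb' : ContinuousOn b' s) {t₀ : ℝ} (ht₀ : t₀ ∈ s) :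
    HasDerivAt (fun t => ∫ σ in (0 : ℝ)..1, P (t, a t + (b t - a t) * σ))
      (∫ σ in (0 : ℝ)..1, fderiv ℝ P (t₀, a t₀ + (b t₀ - a t₀) * σ)
        (1, a' t₀ + (b' t₀ - a' t₀) * σ)) t₀ := by
  have hS : IsOpen (s ×ˢ (univ : Set ℝ)) := hs.prod isOpen_univ
  have hfst {f : ℝ → ℝ} (hf : ContinuousOn f s) :
      ContinuousOn (fun q : ℝ × ℝ => f q.1) (s ×ˢ univ) :=
    hf.comp continuousOn_fst fun q hq => hq.1
  have hac := hfst fun t ht => (ha t ht).continuousAt.continuousWithinAt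
  have hbc := hfst fun t ht => (hb t ht).continuousAt.continuousWithinAt
  have hγ : ContinuousOn (fun q : ℝ × ℝ => (q.1, a q.1 + (b q.1 - a q.1) * q.2)) (s ×ˢ univ) :=
    continuousOn_fst.prodMk (hac.add ((hbc.sub hac).mul continuousOn_snd))
  apply hasDerivAt_intervalIntegral_of_continuousOn (hs.mem_nhds ht₀)
  · exact fun t ht => hP.continuousOn.comp_continuous (by fun_prop) fun _ => by exact ⟨ht, trivial⟩
  · refine ((hP.continuousOn_fderiv_of_isOpen hS le_rfl).comp hγ fun q hq => ⟨hq.1, trivial⟩)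
      |>.clm_apply (continuousOn_const.prodMk ?_)
    exact (hfst ha').add (((hfst hb').sub (hfst ha')).mul continuousOn_snd)
  · intro t ht σ
    have hDP := (hP.differentiableAt_of_mem_prod_univ hs ht (a t + (b t - a t) * σ)).hasFDerivAt
    exact hDP.comp_hasDerivAt t
      ((hasDerivAt_id t).prodMk ((ha t ht).add (((hb t ht).sub (ha t ht)).mul_const σ)))

theorem integral_comp_segment_of_conservationLaw {s : Set ℝ} (hs : IsOpen s) {P Q : ℝ × ℝ → ℝ}
    (hP : ContDiffOn ℝ 1 P (s ×ˢ univ))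
    (hPQ : ∀ t ∈ s, ∀ x, HasDerivAt (fun y => Q (t, y)) (-deriv (fun τ => P (τ, x)) t) x)
    {t₀ : ℝ} (ht₀ : t₀ ∈ s) (u v u' v' : ℝ) :
    (v - u) * (∫ σ in (0 : ℝ)..1, fderiv ℝ P (t₀, u + (v - u) * σ) (1, u' + (v' - u') * σ))
      + (v' - u') * ∫ σ in (0 : ℝ)..1, P (t₀, u + (v - u) * σ)
      = v' * P (t₀, v) - Q (t₀, v) - (u' * P (t₀, u) - Q (t₀, u)) := by
  have hS : IsOpen (s ×ˢ (univ : Set ℝ)) := hs.prod isOpen_univ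
  have hline : Continuous fun σ : ℝ => (t₀, u + (v - u) * σ) := by fun_prop
  have hPc : Continuous fun σ => P (t₀, u + (v - u) * σ) :=
    hP.continuousOn.comp_continuous hline fun _ => ⟨ht₀, trivial⟩
  have hDPc : Continuous fun σ => fderiv ℝ P (t₀, u + (v - u) * σ) (1, u' + (v' - u') * σ) :=
    ((hP.continuousOn_fderiv_of_isOpen hS le_rfl).comp_continuous hline
      fun _ => by exact ⟨ht₀, trivial⟩).clm_apply (by fun_prop)
  have hflux : ∀ σ : ℝ, HasDerivAt
      (fun σ => (u' + (v' - u') * σ) * P (t₀, u + (v - u) * σ) - Q (t₀, u + (v - u) * σ))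
      ((v - u) * fderiv ℝ P (t₀, u + (v - u) * σ) (1, u' + (v' - u') * σ)
        + (v' - u') * P (t₀, u + (v - u) * σ)) σ := by
    intro σ
    have hDP := (hP.differentiableAt_of_mem_prod_univ hs ht₀ (u + (v - u) * σ)).hasFDerivAt
    have hPt := hDP.hasDerivAt_comp_prodMk_left
    have hPy := hDP.hasDerivAt_comp_prodMk_right
    have hQy := hPQ t₀ ht₀ (u + (v - u) * σ)
    rw [hPt.deriv] at hQy
    have hy : HasDerivAt (fun σ => u + (v - u) * σ) (v - u) σ := by
      simpa using ((hasDerivAt_id σ).const_mul (v - u)).const_add u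
    have hc : HasDerivAt (fun σ => u' + (v' - u') * σ) (v' - u') σ := by
      simpa using ((hasDerivAt_id σ).const_mul (v' - u')).const_add u'
    refine ((hc.fun_mul (hPy.comp σ hy)).fun_sub (hQy.comp σ hy)).congr_deriv ?_
    rw [ContinuousLinearMap.apply_prod_eq _ 1 (u' + (v' - u') * σ), one_smul, smul_eq_mul]
    simp only [Function.comp_apply]
    ring
  have hDPi := ((continuous_const (y := v - u)).fun_mul hDPc).intervalIntegrable (μ := volume) 0 1
  have hPi := ((continuous_const (y := v' - u')).fun_mul hPc).intervalIntegrable (μ := volume) 0 1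
  have hint := intervalIntegral.integral_eq_sub_of_hasDerivAt (fun σ _ => hflux σ) (hDPi.add hPi)
  rw [intervalIntegral.integral_add hDPi hPi, intervalIntegral.integral_const_mul,
    intervalIntegral.integral_const_mul] at hint
  rw [hint]
  simp

theorem hasDerivAt_integral_of_conservationLaw {s : Set ℝ} (hs : IsOpen s) {P Q : ℝ × ℝ → ℝ}
    (hP : ContDiffOn ℝ 1 P (s ×ˢ univ))
    (hPQ : ∀ t ∈ s, ∀ x, HasDerivAt (fun y => Q (t, y)) (-deriv (fun τ => P (τ, x)) t) x)
    {a b a' b' : ℝ → ℝ} (ha : ∀ t ∈ s, HasDerivAt a (a' t) t)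
    (hb : ∀ t ∈ s, HasDerivAt b (b' t) t) (ha' : ContinuousOn a' s) (hb' : ContinuousOn b' s)
    {t₀ : ℝ} (ht₀ : t₀ ∈ s) :
    HasDerivAt (fun t => ∫ y in a t..b t, P (t, y))
      (b' t₀ * P (t₀, b t₀) - Q (t₀, b t₀) - (a' t₀ * P (t₀, a t₀) - Q (t₀, a t₀))) t₀ := by
  -- substituting `y = a t + (b t - a t) σ` makes the domain of integration independent of `t`
  have hrescale : (fun t => ∫ y in a t..b t, P (t, y))
      = fun t => (b t - a t) * ∫ σ in (0 : ℝ)..1, P (t, a t + (b t - a t) * σ) := by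
    funext t
    simpa using (intervalIntegral.smul_integral_comp_add_mul (a := 0) (b := 1)
      (fun y => P (t, y)) (b t - a t) (a t)).symm
  rw [hrescale, ← integral_comp_segment_of_conservationLaw hs hP hPQ ht₀]
  refine (((hb t₀ ht₀).fun_sub (ha t₀ ht₀)).fun_mul
    (hasDerivAt_integral_comp_segment hs hP ha hb ha' hb' ht₀)).congr_deriv ?_
  ring

end Calculus

structure IsDiagonalSolution (lm lp : ℝ × ℝ → ℝ) (s : Set ℝ) : Prop where
  contDiffOn_minus : ContDiffOn ℝ 1 lm (s ×ˢ univ)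
  contDiffOn_plus : ContDiffOn ℝ 1 lp (s ×ˢ univ)
  lt : ∀ t ∈ s, ∀ x, lm (t, x) < lp (t, x)
  eq_minus : ∀ t ∈ s, ∀ x,
    deriv (fun τ => lm (τ, x)) t + lp (t, x) * deriv (fun y => lm (t, y)) x = 0
  eq_plus : ∀ t ∈ s, ∀ x,
    deriv (fun τ => lp (τ, x)) t + lm (t, x) * deriv (fun y => lp (t, y)) x = 0

namespace IsDiagonalSolution

variable {lm lp : ℝ × ℝ → ℝ} {s : Set ℝ}

theorem exists_hasDerivAt_partials (h : IsDiagonalSolution lm lp s) (hs : IsOpen s) {t : ℝ}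
    (ht : t ∈ s) (x : ℝ) :
    ∃ mx px : ℝ,
      HasDerivAt (fun y => lm (t, y)) mx x ∧
      HasDerivAt (fun τ => lm (τ, x)) (-(lp (t, x) * mx)) t ∧
      HasDerivAt (fun y => lp (t, y)) px x ∧
      HasDerivAt (fun τ => lp (τ, x)) (-(lm (t, x) * px)) t := by
  have hm := (h.contDiffOn_minus.differentiableAt_of_mem_prod_univ hs ht x).hasFDerivAt
  have hp := (h.contDiffOn_plus.differentiableAt_of_mem_prod_univ hs ht x).hasFDerivAt
  have hsm := h.eq_minus t ht x
  have hsp := h.eq_plus t ht x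
  rw [hm.hasDerivAt_comp_prodMk_left.deriv, hm.hasDerivAt_comp_prodMk_right.deriv] at hsm
  rw [hp.hasDerivAt_comp_prodMk_left.deriv, hp.hasDerivAt_comp_prodMk_right.deriv] at hsp
  refine ⟨_, _, hm.hasDerivAt_comp_prodMk_right, ?_, hp.hasDerivAt_comp_prodMk_right, ?_⟩
  · exact eq_neg_of_add_eq_zero_left hsm ▸ hm.hasDerivAt_comp_prodMk_left
  · exact eq_neg_of_add_eq_zero_left hsp ▸ hp.hasDerivAt_comp_prodMk_left

theorem hasDerivAt_flux_inv_width (h : IsDiagonalSolution lm lp s) (hs : IsOpen s) {t : ℝ}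
    (ht : t ∈ s) (x : ℝ) :
    HasDerivAt (fun y => (lp (t, y) + lm (t, y)) / (2 * (lp (t, y) - lm (t, y))))
      (-deriv (fun τ => 1 / (lp (τ, x) - lm (τ, x))) t) x := by
  obtain ⟨mx, px, hmx, hmt, hpx, hpt⟩ := h.exists_hasDerivAt_partials hs ht x
  have hne : lp (t, x) - lm (t, x) ≠ 0 := (sub_pos.mpr (h.lt t ht x)).ne'
  have hPt : HasDerivAt (fun τ => 1 / (lp (τ, x) - lm (τ, x))) _ t :=
    (hasDerivAt_const t (1 : ℝ)).fun_div (hpt.fun_sub hmt) hne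
  rw [hPt.deriv]
  refine ((hpx.fun_add hmx).fun_div ((hpx.fun_sub hmx).const_mul 2)
    (mul_ne_zero two_ne_zero hne)).congr_deriv ?_
  field_simp
  ring

theorem hasDerivAt_flux_sum_div_width (h : IsDiagonalSolution lm lp s) (hs : IsOpen s) {t : ℝ}
    (ht : t ∈ s) (x : ℝ) :
    HasDerivAt (fun y => 2 * lm (t, y) * lp (t, y) / (lp (t, y) - lm (t, y)))
      (-deriv (fun τ => (lp (τ, x) + lm (τ, x)) / (lp (τ, x) - lm (τ, x))) t) x := by
  obtain ⟨mx, px, hmx, hmt, hpx, hpt⟩ := h.exists_hasDerivAt_partials hs ht x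
  have hne : lp (t, x) - lm (t, x) ≠ 0 := (sub_pos.mpr (h.lt t ht x)).ne'
  have hPt : HasDerivAt (fun τ => (lp (τ, x) + lm (τ, x)) / (lp (τ, x) - lm (τ, x))) _ t :=
    (hpt.fun_add hmt).fun_div (hpt.fun_sub hmt) hne
  rw [hPt.deriv]
  refine (((hmx.const_mul 2).fun_mul hpx).fun_div (hpx.fun_sub hmx) hne).congr_deriv ?_
  field_simp
  ring

theorem of_derivWithin {u : Set ℝ} (hs : IsOpen s) (hsu : s ⊆ u)
    (hlm : ContDiffOn ℝ 1 lm (u ×ˢ univ)) (hlp : ContDiffOn ℝ 1 lp (u ×ˢ univ))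
    (hlt : ∀ t ∈ u, ∀ x, lm (t, x) < lp (t, x))
    (hsm : ∀ t ∈ u, ∀ x,
      derivWithin (fun τ => lm (τ, x)) u t + lp (t, x) * deriv (fun y => lm (t, y)) x = 0)
    (hsp : ∀ t ∈ u, ∀ x,
      derivWithin (fun τ => lp (τ, x)) u t + lm (t, x) * deriv (fun y => lp (t, y)) x = 0) :
    IsDiagonalSolution lm lp s where
  contDiffOn_minus := hlm.mono (prod_mono hsu subset_rfl)
  contDiffOn_plus := hlp.mono (prod_mono hsu subset_rfl)
  lt t ht := hlt t (hsu ht)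
  eq_minus t ht x := by
    rw [← derivWithin_of_mem_nhds (Filter.mem_of_superset (hs.mem_nhds ht) hsu)]
    exact hsm t (hsu ht) x
  eq_plus t ht x := by
    rw [← derivWithin_of_mem_nhds (Filter.mem_of_superset (hs.mem_nhds ht) hsu)]
    exact hsp t (hsu ht) x

variable {xm xp : ℝ → ℝ}

theorem hasDerivAt_integral_between_characteristics (h : IsDiagonalSolution lm lp s)
    (hs : IsOpen s) {P Q : ℝ × ℝ → ℝ} (hP : ContDiffOn ℝ 1 P (s ×ˢ univ))
    (hPQ : ∀ t ∈ s, ∀ x, HasDerivAt (fun y => Q (t, y)) (-deriv (fun τ => P (τ, x)) t) x)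
    (hxm : ∀ t ∈ s, HasDerivAt xm (lp (t, xm t)) t) (hxp : ∀ t ∈ s, HasDerivAt xp (lm (t, xp t)) t)
    {t₀ : ℝ} (ht₀ : t₀ ∈ s) :
    HasDerivAt (fun t => ∫ y in xm t..xp t, P (t, y))
      (lm (t₀, xp t₀) * P (t₀, xp t₀) - Q (t₀, xp t₀)
        - (lp (t₀, xm t₀) * P (t₀, xm t₀) - Q (t₀, xm t₀))) t₀ := by
  have hspeed {f : ℝ × ℝ → ℝ} {x : ℝ → ℝ} (hf : ContDiffOn ℝ 1 f (s ×ˢ univ))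
      (hx : ∀ t ∈ s, HasDerivAt x (f (t, x t)) t) : ContinuousOn (fun t => f (t, x t)) s :=
    hf.continuousOn.comp
      (continuousOn_id.prodMk fun t ht => (hx t ht).continuousAt.continuousWithinAt)
      fun t ht => ⟨ht, trivial⟩
  exact hasDerivAt_integral_of_conservationLaw hs hP hPQ hxm hxp (hspeed h.contDiffOn_plus hxm)
    (hspeed h.contDiffOn_minus hxp) ht₀

theorem hasDerivAt_add_integral_inv_width (h : IsDiagonalSolution lm lp s) (hs : IsOpen s)
    (hxm : ∀ t ∈ s, HasDerivAt xm (lp (t, xm t)) t) (hxp : ∀ t ∈ s, HasDerivAt xp (lm (t, xp t)) t)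
    {t₀ : ℝ} (ht₀ : t₀ ∈ s) :
    HasDerivAt (fun t => t + ∫ y in xm t..xp t, 1 / (lp (t, y) - lm (t, y))) 0 t₀ := by
  have hne : ∀ p ∈ s ×ˢ univ, lp p - lm p ≠ 0 := fun p hp => (sub_pos.mpr (h.lt p.1 hp.1 p.2)).ne'
  refine ((hasDerivAt_id t₀).add (h.hasDerivAt_integral_between_characteristics hs
    (P := fun p => 1 / (lp p - lm p))
    (Q := fun p => (lp p + lm p) / (2 * (lp p - lm p)))
    (contDiffOn_const.div (h.contDiffOn_plus.sub h.contDiffOn_minus) hne)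
    (fun t ht x => h.hasDerivAt_flux_inv_width hs ht x) hxm hxp ht₀)).congr_deriv ?_
  have hne_m := hne (t₀, xm t₀) ⟨ht₀, trivial⟩
  have hne_p := hne (t₀, xp t₀) ⟨ht₀, trivial⟩
  field_simp
  ring

theorem hasDerivAt_add_integral_sum_div_width (h : IsDiagonalSolution lm lp s) (hs : IsOpen s)
    (hxm : ∀ t ∈ s, HasDerivAt xm (lp (t, xm t)) t) (hxp : ∀ t ∈ s, HasDerivAt xp (lm (t, xp t)) t)
    {t₀ : ℝ} (ht₀ : t₀ ∈ s) :
    HasDerivAt (fun t => xm t + xp t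
      + ∫ y in xm t..xp t, (lp (t, y) + lm (t, y)) / (lp (t, y) - lm (t, y))) 0 t₀ := by
  have hne : ∀ p ∈ s ×ˢ univ, lp p - lm p ≠ 0 := fun p hp => (sub_pos.mpr (h.lt p.1 hp.1 p.2)).ne'
  refine (((hxm t₀ ht₀).add (hxp t₀ ht₀)).add (h.hasDerivAt_integral_between_characteristics hs
    (P := fun p => (lp p + lm p) / (lp p - lm p))
    (Q := fun p => 2 * lm p * lp p / (lp p - lm p))
    ((h.contDiffOn_plus.add h.contDiffOn_minus).div (h.contDiffOn_plus.sub h.contDiffOn_minus) hne)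
    (fun t ht x => h.hasDerivAt_flux_sum_div_width hs ht x) hxm hxp ht₀)).congr_deriv ?_
  have hne_m := hne (t₀, xm t₀) ⟨ht₀, trivial⟩
  have hne_p := hne (t₀, xp t₀) ⟨ht₀, trivial⟩
  field_simp
  ring

end IsDiagonalSolution

theorem intersection_of_characteristics_coordinates_general
    (T : ℝ)
    (Lm Lp : ℝ → ℝ)
    (lm lp : ℝ × ℝ → ℝ)
    (hlm : ContDiffOn ℝ 1 lm (Ico 0 T ×ˢ (univ : Set ℝ)))
    (hlp : ContDiffOn ℝ 1 lp (Ico 0 T ×ˢ (univ : Set ℝ)))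
    (hinit : ∀ x : ℝ, lm (0, x) = Lm x ∧ lp (0, x) = Lp x)
    (hordl : ∀ t ∈ Ico (0:ℝ) T, ∀ x : ℝ, lm (t, x) < lp (t, x))
    (sys1 : ∀ t ∈ Ico (0:ℝ) T, ∀ x : ℝ,
      derivWithin (fun s => lm (s, x)) (Ico 0 T) t
        + lp (t, x) * deriv (fun y => lm (t, y)) x = 0)
    (sys2 : ∀ t ∈ Ico (0:ℝ) T, ∀ x : ℝ,
      derivWithin (fun s => lp (s, x)) (Ico 0 T) t
        + lm (t, x) * deriv (fun y => lp (t, y)) x = 0)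
    (α β tstar : ℝ) (hts0 : 0 ≤ tstar) (htsT : tstar < T)
    (xm xp : ℝ → ℝ)
    (hxm0 : xm 0 = α) (hxp0 : xp 0 = β)
    (hxm : ∀ t ∈ Icc 0 tstar, HasDerivWithinAt xm (lp (t, xm t)) (Icc 0 tstar) t)
    (hxp : ∀ t ∈ Icc 0 tstar, HasDerivWithinAt xp (lm (t, xp t)) (Icc 0 tstar) t)
    (hmeet : xm tstar = xp tstar) :
    tstar = ∫ ζ in α..β, 1 / (Lp ζ - Lm ζ)
    ∧ xm tstar = (α + β + ∫ ζ in α..β, (Lp ζ + Lm ζ) / (Lp ζ - Lm ζ)) / 2 := by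
  have hsol : IsDiagonalSolution lm lp (Ioo 0 tstar) := .of_derivWithin isOpen_Ioo
    (Ioo_subset_Ico_self.trans (Ico_subset_Ico_right htsT.le)) hlm hlp hordl sys1 sys2
  have hxm' (t : ℝ) (ht : t ∈ Ioo 0 tstar) : HasDerivAt xm (lp (t, xm t)) t :=
    (hxm t (Ioo_subset_Icc_self ht)).hasDerivAt (Icc_mem_nhds ht.1 ht.2)
  have hxp' (t : ℝ) (ht : t ∈ Ioo 0 tstar) : HasDerivAt xp (lm (t, xp t)) t :=
    (hxp t (Ioo_subset_Icc_self ht)).hasDerivAt (Icc_mem_nhds ht.1 ht.2)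
  have hstrip : Icc 0 tstar ×ˢ univ ⊆ Ico 0 T ×ˢ (univ : Set ℝ) :=
    prod_mono (Icc_subset_Ico_right htsT) subset_rfl
  have hlmc := hlm.continuousOn.mono hstrip
  have hlpc := hlp.continuousOn.mono hstrip
  have hne (p : ℝ × ℝ) (hp : p ∈ Icc 0 tstar ×ˢ univ) : lp p - lm p ≠ 0 :=
    (sub_pos.mpr (hordl p.1 (hstrip hp).1 p.2)).ne'
  have hxmc : ContinuousOn xm (Icc 0 tstar) := fun t ht => (hxm t ht).continuousWithinAt
  have hxpc : ContinuousOn xp (Icc 0 tstar) := fun t ht => (hxp t ht).continuousWithinAt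
  have htime := eq_of_hasDerivAt_zero_of_continuousOn hts0
    (fun t ht => hsol.hasDerivAt_add_integral_inv_width isOpen_Ioo hxm' hxp' ht)
    (continuousOn_id.add (continuousOn_parametric_intervalIntegral_of_continuousOn
      (P := fun p => 1 / (lp p - lm p)) (continuousOn_const.div (hlpc.sub hlmc) hne) hxmc hxpc))
  have hpos := eq_of_hasDerivAt_zero_of_continuousOn hts0
    (fun t ht => hsol.hasDerivAt_add_integral_sum_div_width isOpen_Ioo hxm' hxp' ht)
    ((hxmc.add hxpc).add (continuousOn_parametric_intervalIntegral_of_continuousOn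
      (P := fun p => (lp p + lm p) / (lp p - lm p)) ((hlpc.add hlmc).div (hlpc.sub hlmc) hne)
      hxmc hxpc))
  have hm0 (x : ℝ) : lm (0, x) = Lm x := (hinit x).1
  have hp0 (x : ℝ) : lp (0, x) = Lp x := (hinit x).2
  simp only [hmeet, hxm0, hxp0, hm0, hp0, intervalIntegral.integral_same] at htime hpos
  constructor <;> linarith

/-- Coordinates of the intersection point of two characteristics of different families,
expressed in terms of the initial data (Lemma 2.2 / Kong–Zhang formulas (2.8)–(2.9)). -/
theorem intersection_of_characteristics_coordinates
    (T : ℝ) (hT : 0 < T)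
    (Lm Lp : ℝ → ℝ) (hLm : ContDiff ℝ 1 Lm) (hLp : ContDiff ℝ 1 Lp)
    (hord : ∀ x, Lm x < Lp x)
    (lm lp : ℝ × ℝ → ℝ)
    (hlm : ContDiffOn ℝ 1 lm (Ico 0 T ×ˢ (univ : Set ℝ)))
    (hlp : ContDiffOn ℝ 1 lp (Ico 0 T ×ˢ (univ : Set ℝ)))
    (hinit : ∀ x : ℝ, lm (0, x) = Lm x ∧ lp (0, x) = Lp x)
    (hordl : ∀ t ∈ Ico (0:ℝ) T, ∀ x : ℝ, lm (t, x) < lp (t, x))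
    (sys1 : ∀ t ∈ Ico (0:ℝ) T, ∀ x : ℝ,
      derivWithin (fun s => lm (s, x)) (Ico 0 T) t
        + lp (t, x) * deriv (fun y => lm (t, y)) x = 0)
    (sys2 : ∀ t ∈ Ico (0:ℝ) T, ∀ x : ℝ,
      derivWithin (fun s => lp (s, x)) (Ico 0 T) t
        + lm (t, x) * deriv (fun y => lp (t, y)) x = 0)
    (α β tstar : ℝ) (hαβ : α ≤ β) (hts0 : 0 ≤ tstar) (htsT : tstar < T)
    (xm xp : ℝ → ℝ)
    (hxm0 : xm 0 = α) (hxp0 : xp 0 = β)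
    (hxm : ∀ t ∈ Icc 0 tstar, HasDerivWithinAt xm (lp (t, xm t)) (Icc 0 tstar) t)
    (hxp : ∀ t ∈ Icc 0 tstar, HasDerivWithinAt xp (lm (t, xp t)) (Icc 0 tstar) t)
    (hmeet : xm tstar = xp tstar) :
    tstar = ∫ ζ in α..β, 1 / (Lp ζ - Lm ζ)
    ∧ xm tstar = (α + β + ∫ ζ in α..β, (Lp ζ + Lm ζ) / (Lp ζ - Lm ζ)) / 2 :=
  intersection_of_characteristics_coordinates_general T Lm Lp lm lp hlm hlp hinit hordl sys1 sys2 α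
    β tstar hts0 htsT xm xp hxm0 hxp0 hxm hxp hmeet
end

section
/- Let Λ₋, Λ₊ : ℝ → ℝ be C¹, and let λ₋, λ₊ : [0,T) × ℝ → ℝ be a C¹ solution of the diagonal system (∗) with λ₋(0,·) = Λ₋, λ₊(0,·) = Λ₊. Suppose the characteristic family x⁻(t,α) (solving ∂_t x⁻ = λ₊(t, x⁻), x⁻(0,α) = α) is C¹ in (t,α) on [0,T) × ℝ. Then for every α with Λ₊(α) ≠ Λ₋(α) and every t ∈ [0,T): ∂x⁻/∂α (t,α) = (λ₊(t, x⁻(t,α)) − Λ₋(α)) / (Λ₊(α) − Λ₋(α)). -/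
/-!
By the first equation, `λ₋` is constant along the characteristic `x⁻(·, α)`, equal to `Λ₋(α)`.
The second equation then gives `d/dt λ₊(t, x⁻) = (λ₊ - λ₋) ∂ₓλ₊ = c(t) (λ₊(t, x⁻) - Λ₋(α))` with
`c(t) = ∂ₓλ₊(t, x⁻(t, α))`. Differentiating `x⁻(t, α) = α + ∫₀ᵗ λ₊(s, x⁻(s, α)) ds` under the
integral sign shows that `∂_α x⁻` solves the same linear equation `y' = c y`. Both sides of the
identity equal `1` at `t = 0`, so they agree by uniqueness for linear ODEs.
-/

open Set Filter Topology MeasureTheory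

section PartialDerivatives

variable {s : Set ℝ} {F : ℝ × ℝ → ℝ} {L : ℝ × ℝ →L[ℝ] ℝ} {t x : ℝ}

theorem ContinuousOn.comp_graph {γ : ℝ → ℝ} (hF : ContinuousOn F (s ×ˢ univ))
    (hγ : ContinuousOn γ s) : ContinuousOn (fun r => F (r, γ r)) s :=
  hF.comp (continuousOn_id.prodMk hγ) fun _ hr => ⟨hr, mem_univ _⟩

theorem HasFDerivWithinAt.hasDerivAt_comp_prodMk_right
    (hF : HasFDerivWithinAt F L (s ×ˢ univ) (t, x)) (ht : t ∈ s) :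
    HasDerivAt (fun y => F (t, y)) (L (0, 1)) x := by
  have h := hF.comp_hasDerivWithinAt (s := univ) x
    ((hasDerivAt_const x t).prodMk (hasDerivAt_id x)).hasDerivWithinAt
    fun _ _ => ⟨ht, mem_univ _⟩
  rwa [hasDerivWithinAt_univ] at h

theorem HasFDerivWithinAt.hasDerivWithinAt_comp_graph {γ : ℝ → ℝ} {v : ℝ}
    (hF : HasFDerivWithinAt F L (s ×ˢ univ) (t, γ t)) (hγ : HasDerivWithinAt γ v s t) :
    HasDerivWithinAt (fun r => F (r, γ r)) (L (1, 0) + v * L (0, 1)) s t := by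
  have h := hF.comp_hasDerivWithinAt t ((hasDerivWithinAt_id t s).prodMk hγ)
    fun r hr => (⟨hr, mem_univ _⟩ : (r, γ r) ∈ s ×ˢ univ)
  have hsplit : ((1 : ℝ), v) = (1, 0) + v • ((0 : ℝ), (1 : ℝ)) := by simp
  rwa [hsplit, map_add, map_smul, smul_eq_mul] at h

theorem DifferentiableWithinAt.hasDerivWithinAt_comp_graph {γ : ℝ → ℝ} {v : ℝ}
    (hF : DifferentiableWithinAt ℝ F (s ×ˢ univ) (t, γ t)) (ht : t ∈ s)
    (hs : UniqueDiffWithinAt ℝ s t) (hγ : HasDerivWithinAt γ v s t) :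
    HasDerivWithinAt (fun r => F (r, γ r))
      (derivWithin (fun r => F (r, γ t)) s t + v * deriv (fun y => F (t, y)) (γ t)) s t := by
  have hF' := hF.hasFDerivWithinAt
  have htime := hF'.hasDerivWithinAt_comp_graph (γ := fun _ => γ t) (hasDerivWithinAt_const t s _)
  rw [zero_mul, add_zero] at htime
  rw [htime.derivWithin hs, (hF'.hasDerivAt_comp_prodMk_right ht).deriv]
  exact hF'.hasDerivWithinAt_comp_graph hγ

theorem ContDiffOn.continuousOn_deriv_comp_prodMk_right
    (hF : ContDiffOn ℝ 1 F (s ×ˢ univ)) (hs : UniqueDiffOn ℝ s) :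
    ContinuousOn (fun p : ℝ × ℝ => deriv (fun y => F (p.1, y)) p.2) (s ×ˢ univ) := by
  refine ((hF.continuousOn_fderivWithin (hs.prod uniqueDiffOn_univ) le_rfl).clm_apply
    (continuousOn_const (c := ((0 : ℝ), (1 : ℝ))))).congr fun p hp => ?_
  exact (((hF.differentiableOn one_ne_zero) p hp).hasFDerivWithinAt.hasDerivAt_comp_prodMk_right
    hp.1).deriv

theorem DifferentiableOn.differentiableAt_comp_prodMk_right
    (hF : DifferentiableOn ℝ F (s ×ˢ univ)) (ht : t ∈ s) (x : ℝ) :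
    DifferentiableAt ℝ (fun y => F (t, y)) x :=
  ((hF (t, x) ⟨ht, mem_univ x⟩).hasFDerivWithinAt.hasDerivAt_comp_prodMk_right
    ht).differentiableAt

end PartialDerivatives

section OrdinaryDifferentialEquations

variable {a b : ℝ}

theorem hasDerivWithinAt_integral_Ici {u : ℝ → ℝ} (hu : ContinuousOn u (Ico a b)) {t : ℝ}
    (ht : t ∈ Ico a b) : HasDerivWithinAt (fun r => ∫ s in a..r, u s) (u t) (Ici t) t := by
  have hnhds : Ico a b ∈ 𝓝[>] t := Ico_mem_nhdsGT_of_mem ht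
  refine intervalIntegral.integral_hasDerivWithinAt_right (t := Ioi t) ?_ ?_
    ((hu t ht).mono_of_mem_nhdsWithin hnhds)
  · exact (hu.mono (Icc_subset_Ico_right ht.2)).intervalIntegrable_of_Icc ht.1
  · exact (hu.stronglyMeasurableAtFilter_nhdsWithin measurableSet_Ico t).filter_mono
      (nhdsWithin_le_of_mem hnhds)

theorem eq_of_hasDerivWithinAt_zero_Ico {f : ℝ → ℝ}
    (hf : ∀ t ∈ Ico a b, HasDerivWithinAt f 0 (Ico a b) t) {t : ℝ} (ht : t ∈ Ico a b) :
    f t = f a := by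
  have hsub : Icc a t ⊆ Ico a b := Icc_subset_Ico_right ht.2
  exact constant_of_has_deriv_right_zero
    (fun s hs => (hf s (hsub hs)).continuousWithinAt.mono hsub)
    (fun s hs => (hf s (hsub (Ico_subset_Icc_self hs))).mono_of_mem_nhdsWithin
      (Ico_mem_nhdsGE_of_mem (hsub (Ico_subset_Icc_self hs))))
    t ⟨ht.1, le_rfl⟩

theorem eqOn_Ico_of_hasDerivWithinAt_mul {c f g : ℝ → ℝ} (hc : ContinuousOn c (Ico a b))
    (hf : ContinuousOn f (Ico a b)) (hf' : ∀ t ∈ Ico a b, HasDerivWithinAt f (c t * f t) (Ici t) t)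
    (hg : ContinuousOn g (Ico a b)) (hg' : ∀ t ∈ Ico a b, HasDerivWithinAt g (c t * g t) (Ici t) t)
    (ha : f a = g a) : EqOn f g (Ico a b) := by
  intro t ht
  have hsub : Icc a t ⊆ Ico a b := Icc_subset_Ico_right ht.2
  obtain ⟨K, hK⟩ := isCompact_Icc.exists_bound_of_continuousOn (hc.mono hsub)
  have hlip : ∀ s ∈ Ico a t, LipschitzOnWith K.toNNReal (fun y => c s * y) univ := fun s hs =>
    ((lipschitzWith_smul (c s)).weaken (by
      rw [← NNReal.coe_le_coe, coe_nnnorm, Real.coe_toNNReal']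
      exact (hK s (Ico_subset_Icc_self hs)).trans (le_max_left _ _))).lipschitzOnWith
  exact ODE_solution_unique_of_mem_Icc_right hlip (hf.mono hsub)
    (fun s hs => hf' s (hsub (Ico_subset_Icc_self hs))) (fun _ _ => mem_univ _) (hg.mono hsub)
    (fun s hs => hg' s (hsub (Ico_subset_Icc_self hs))) (fun _ _ => mem_univ _) ha
    ⟨ht.1, le_rfl⟩

end OrdinaryDifferentialEquations

theorem hasDerivAt_intervalIntegral_of_continuousOn_s3 {G G' : ℝ × ℝ → ℝ} {u v : ℝ}
    (hG : ContinuousOn G (uIcc u v ×ˢ univ)) (hG' : ContinuousOn G' (uIcc u v ×ˢ univ))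
    (hderiv : ∀ s ∈ uIcc u v, ∀ b, HasDerivAt (fun b => G (s, b)) (G' (s, b)) b) (a : ℝ) :
    HasDerivAt (fun b => ∫ s in u..v, G (s, b)) (∫ s in u..v, G' (s, a)) a := by
  have hslice : ∀ {H : ℝ × ℝ → ℝ}, ContinuousOn H (uIcc u v ×ˢ univ) → ∀ b,
      ContinuousOn (fun s => H (s, b)) (uIcc u v) :=
    fun hH b => hH.comp_graph continuousOn_const
  obtain ⟨M, hM⟩ := (isCompact_uIcc.prod (isCompact_closedBall a 1)).exists_bound_of_continuousOn
    (hG'.mono (prod_mono le_rfl (subset_univ _)))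
  refine (intervalIntegral.hasDerivAt_integral_of_dominated_loc_of_deriv_le (bound := fun _ => M)
    (Metric.ball_mem_nhds a one_pos) (Eventually.of_forall fun b => ?_)
    ((hslice hG a).intervalIntegrable) ?_ (ae_of_all _ fun s hs b hb => ?_)
    intervalIntegrable_const (ae_of_all _ fun s hs b _ => hderiv s (uIoc_subset_uIcc hs) b)).2
  · exact ((hslice hG b).mono uIoc_subset_uIcc).aestronglyMeasurable measurableSet_uIoc
  · exact ((hslice hG' a).mono uIoc_subset_uIcc).aestronglyMeasurable measurableSet_uIoc
  · exact hM (s, b) ⟨uIoc_subset_uIcc hs, Metric.ball_subset_closedBall hb⟩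

section Characteristics

def IsCharacteristicFlow (T : ℝ) (v X : ℝ × ℝ → ℝ) : Prop :=
  (∀ α, X (0, α) = α) ∧
    ∀ t ∈ Ico (0 : ℝ) T, ∀ α, HasDerivWithinAt (fun s => X (s, α)) (v (t, X (t, α))) (Ico 0 T) t

variable {T : ℝ} {v X : ℝ × ℝ → ℝ}

theorem apply_characteristic_eq_of_transport {u : ℝ × ℝ → ℝ}
    (hu : DifferentiableOn ℝ u (Ico 0 T ×ˢ univ)) (hX : IsCharacteristicFlow T v X)
    (htransport : ∀ t ∈ Ico (0 : ℝ) T, ∀ x,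
      derivWithin (fun s => u (s, x)) (Ico 0 T) t + v (t, x) * deriv (fun y => u (t, y)) x = 0)
    {t : ℝ} (ht : t ∈ Ico 0 T) (α : ℝ) :
    u (t, X (t, α)) = u (0, α) := by
  have hconst := eq_of_hasDerivWithinAt_zero_Ico (f := fun s => u (s, X (s, α))) (fun s hs => by
    simpa only [htransport s hs] using
      (hu _ ⟨hs, mem_univ _⟩).hasDerivWithinAt_comp_graph hs (uniqueDiffOn_Ico 0 T s hs)
      (hX.2 s hs α)) ht
  rwa [hX.1] at hconst

theorem characteristic_eq_add_integral (hv : ContinuousOn v (Ico 0 T ×ˢ univ))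
    (hX : IsCharacteristicFlow T v X) {t : ℝ} (ht : t ∈ Ico 0 T) (α : ℝ) :
    X (t, α) = α + ∫ s in 0..t, v (s, X (s, α)) := by
  have hsub : Icc 0 t ⊆ Ico 0 T := Icc_subset_Ico_right ht.2
  have hXc : ContinuousOn (fun s => X (s, α)) (Ico 0 T) :=
    fun s hs => (hX.2 s hs α).continuousWithinAt
  have hFTC := intervalIntegral.integral_eq_sub_of_hasDeriv_right_of_le ht.1 (hXc.mono hsub)
    (fun s hs => (hX.2 s (hsub (Ioo_subset_Icc_self hs)) α).mono_of_mem_nhdsWithin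
      (Ico_mem_nhdsGT_of_mem (hsub (Ioo_subset_Icc_self hs))))
    ((hv.comp_graph hXc).mono hsub |>.intervalIntegrable_of_Icc ht.1)
  rw [hFTC, hX.1]
  ring

theorem deriv_characteristic_eq_one_add_integral (hv : ContDiffOn ℝ 1 v (Ico 0 T ×ˢ univ))
    (hXC1 : ContDiffOn ℝ 1 X (Ico 0 T ×ˢ univ)) (hX : IsCharacteristicFlow T v X)
    {t : ℝ} (ht : t ∈ Ico 0 T) (α : ℝ) :
    deriv (fun β => X (t, β)) α
      = 1 + ∫ s in 0..t, deriv (fun y => v (s, y)) (X (s, α)) * deriv (fun β => X (s, β)) α := by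
  have hIcc : uIcc 0 t ⊆ Ico 0 T := by rw [uIcc_of_le ht.1]; exact Icc_subset_Ico_right ht.2
  have hsub : uIcc 0 t ×ˢ univ ⊆ Ico 0 T ×ˢ (univ : Set ℝ) := prod_mono hIcc le_rfl
  have hgraph : MapsTo (fun p : ℝ × ℝ => (p.1, X p)) (Ico 0 T ×ˢ univ) (Ico 0 T ×ˢ univ) :=
    fun p hp => ⟨hp.1, mem_univ _⟩
  have hgraphc : ContinuousOn (fun p : ℝ × ℝ => (p.1, X p)) (Ico 0 T ×ˢ univ) :=
    continuousOn_fst.prodMk hXC1.continuousOn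
  have hvD := hv.differentiableOn one_ne_zero
  have hXD := hXC1.differentiableOn one_ne_zero
  have hintegral := hasDerivAt_intervalIntegral_of_continuousOn_s3
    (G := fun p => v (p.1, X p))
    (G' := fun p => deriv (fun y => v (p.1, y)) (X p) * deriv (fun β => X (p.1, β)) p.2)
    ((hv.continuousOn.comp hgraphc hgraph).mono hsub)
    ((((hv.continuousOn_deriv_comp_prodMk_right (uniqueDiffOn_Ico 0 T)).comp hgraphc hgraph).mul
      (hXC1.continuousOn_deriv_comp_prodMk_right (uniqueDiffOn_Ico 0 T))).mono hsub)
    (fun s hs β => (hvD.differentiableAt_comp_prodMk_right (hIcc hs) _).hasDerivAt.comp β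
      (hXD.differentiableAt_comp_prodMk_right (hIcc hs) β).hasDerivAt) α
  have hrepr : (fun β => X (t, β)) = fun β => β + ∫ s in 0..t, v (s, X (s, β)) :=
    funext (characteristic_eq_add_integral hv.continuousOn hX ht)
  rw [hrepr]
  exact ((hasDerivAt_id α).add hintegral).deriv

theorem hasDerivWithinAt_deriv_characteristic (hv : ContDiffOn ℝ 1 v (Ico 0 T ×ˢ univ))
    (hXC1 : ContDiffOn ℝ 1 X (Ico 0 T ×ˢ univ)) (hX : IsCharacteristicFlow T v X)
    {t : ℝ} (ht : t ∈ Ico 0 T) (α : ℝ) :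
    HasDerivWithinAt (fun s => deriv (fun β => X (s, β)) α)
      (deriv (fun y => v (t, y)) (X (t, α)) * deriv (fun β => X (t, β)) α) (Ici t) t := by
  have hcont : ContinuousOn
      (fun s => deriv (fun y => v (s, y)) (X (s, α)) * deriv (fun β => X (s, β)) α) (Ico 0 T) :=
    ((hv.continuousOn_deriv_comp_prodMk_right (uniqueDiffOn_Ico 0 T)).comp_graph
      (hXC1.continuousOn.comp_graph continuousOn_const)).mul
      ((hXC1.continuousOn_deriv_comp_prodMk_right (uniqueDiffOn_Ico 0 T)).comp_graph
        continuousOn_const)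
  exact ((hasDerivWithinAt_integral_Ici hcont ht).const_add 1).congr_of_eventuallyEq
    (eventually_of_mem (Ico_mem_nhdsGE_of_mem ht) fun s hs =>
      deriv_characteristic_eq_one_add_integral hv hXC1 hX hs α)
    (deriv_characteristic_eq_one_add_integral hv hXC1 hX ht α)

end Characteristics

theorem characteristic_derivative_in_alpha_general
    (T : ℝ)
    (Lm Lp : ℝ → ℝ)
    (lm lp : ℝ × ℝ → ℝ)
    (hlm : ContDiffOn ℝ 1 lm (Ico 0 T ×ˢ (univ : Set ℝ)))
    (hlp : ContDiffOn ℝ 1 lp (Ico 0 T ×ˢ (univ : Set ℝ)))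
    (hinit : ∀ x : ℝ, lm (0, x) = Lm x ∧ lp (0, x) = Lp x)
    (sys1 : ∀ t ∈ Ico (0:ℝ) T, ∀ x : ℝ,
      derivWithin (fun s => lm (s, x)) (Ico 0 T) t
        + lp (t, x) * deriv (fun y => lm (t, y)) x = 0)
    (sys2 : ∀ t ∈ Ico (0:ℝ) T, ∀ x : ℝ,
      derivWithin (fun s => lp (s, x)) (Ico 0 T) t
        + lm (t, x) * deriv (fun y => lp (t, y)) x = 0)
    (xm : ℝ × ℝ → ℝ)
    (hxmC1 : ContDiffOn ℝ 1 xm (Ico 0 T ×ˢ (univ : Set ℝ)))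
    (hxm0 : ∀ a : ℝ, xm (0, a) = a)
    (hxmode : ∀ t ∈ Ico (0:ℝ) T, ∀ a : ℝ,
      HasDerivWithinAt (fun s => xm (s, a)) (lp (t, xm (t, a))) (Ico 0 T) t) :
    ∀ a : ℝ, Lp a ≠ Lm a → ∀ t ∈ Ico (0:ℝ) T,
      deriv (fun b => xm (t, b)) a
        = (lp (t, xm (t, a)) - Lm a) / (Lp a - Lm a) := by
  intro α hα t ht
  have hU := uniqueDiffOn_Ico 0 T
  have hγ : ContinuousOn (fun s => xm (s, α)) (Ico 0 T) :=
    hxmC1.continuousOn.comp_graph continuousOn_const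
  have hRiemann : ∀ s ∈ Ico 0 T, lm (s, xm (s, α)) = Lm α := fun s hs => by
    rw [apply_characteristic_eq_of_transport (hlm.differentiableOn one_ne_zero) ⟨hxm0, hxmode⟩
      sys1 hs, (hinit α).1]
  have hrhs : ∀ s ∈ Ico 0 T, HasDerivWithinAt (fun r => (lp (r, xm (r, α)) - Lm α) / (Lp α - Lm α))
      (deriv (fun y => lp (s, y)) (xm (s, α)) * ((lp (s, xm (s, α)) - Lm α) / (Lp α - Lm α)))
      (Ici s) s := fun s hs => by
    have h := ((hlp.differentiableOn one_ne_zero _ ⟨hs, mem_univ _⟩).hasDerivWithinAt_comp_graph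
      hs (hU s hs) (hxmode s hs α)).sub_const (Lm α) |>.div_const (Lp α - Lm α)
    refine (h.mono_of_mem_nhdsWithin (Ico_mem_nhdsGE_of_mem hs)).congr_deriv ?_
    rw [eq_neg_of_add_eq_zero_left (sys2 s hs _), hRiemann s hs]
    ring
  refine eqOn_Ico_of_hasDerivWithinAt_mul (g := fun r => (lp (r, xm (r, α)) - Lm α) / (Lp α - Lm α))
    ((hlp.continuousOn_deriv_comp_prodMk_right hU).comp_graph hγ)
    ((hxmC1.continuousOn_deriv_comp_prodMk_right hU).comp_graph continuousOn_const)
    (fun s hs => hasDerivWithinAt_deriv_characteristic hlp hxmC1 ⟨hxm0, hxmode⟩ hs α)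
    (((hlp.continuousOn.comp_graph hγ).sub continuousOn_const).div_const _) hrhs ?_ ht
  have hid : (fun β => xm (0, β)) = id := funext hxm0
  rw [hid, deriv_id, hxm0, (hinit α).2, div_self (sub_ne_zero.mpr hα)]

/-- Formula (2.10): the derivative of the characteristic `x⁻(t,α)` with respect to the
initial point `α`. -/
theorem characteristic_derivative_in_alpha
    (T : ℝ) (hT : 0 < T)
    (Lm Lp : ℝ → ℝ) (hLm : ContDiff ℝ 1 Lm) (hLp : ContDiff ℝ 1 Lp)
    (lm lp : ℝ × ℝ → ℝ)
    (hlm : ContDiffOn ℝ 1 lm (Ico 0 T ×ˢ (univ : Set ℝ)))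
    (hlp : ContDiffOn ℝ 1 lp (Ico 0 T ×ˢ (univ : Set ℝ)))
    (hinit : ∀ x : ℝ, lm (0, x) = Lm x ∧ lp (0, x) = Lp x)
    (sys1 : ∀ t ∈ Ico (0:ℝ) T, ∀ x : ℝ,
      derivWithin (fun s => lm (s, x)) (Ico 0 T) t
        + lp (t, x) * deriv (fun y => lm (t, y)) x = 0)
    (sys2 : ∀ t ∈ Ico (0:ℝ) T, ∀ x : ℝ,
      derivWithin (fun s => lp (s, x)) (Ico 0 T) t
        + lm (t, x) * deriv (fun y => lp (t, y)) x = 0)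
    (xm : ℝ × ℝ → ℝ)
    (hxmC1 : ContDiffOn ℝ 1 xm (Ico 0 T ×ˢ (univ : Set ℝ)))
    (hxm0 : ∀ a : ℝ, xm (0, a) = a)
    (hxmode : ∀ t ∈ Ico (0:ℝ) T, ∀ a : ℝ,
      HasDerivWithinAt (fun s => xm (s, a)) (lp (t, xm (t, a))) (Ico 0 T) t) :
    ∀ a : ℝ, Lp a ≠ Lm a → ∀ t ∈ Ico (0:ℝ) T,
      deriv (fun b => xm (t, b)) a
        = (lp (t, xm (t, a)) - Lm a) / (Lp a - Lm a) :=
  characteristic_derivative_in_alpha_general T Lm Lp lm lp hlm hlp hinit sys1 sys2 xm hxmC1 hxm0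
    hxmode
end

section
/- Let Λ₋, Λ₊ : ℝ → ℝ be C¹, let t₀ > 0, and let λ₋, λ₊ : [0,t₀) × ℝ → ℝ be a C¹ solution of the diagonal system (∗) with λ₋(0,·) = Λ₋, λ₊(0,·) = Λ₊, such that the characteristic family x⁻(t,α) (solving ∂_t x⁻ = λ₊(t, x⁻), x⁻(0,α) = α) is C¹ in (t,α). Fix α with Λ₊(α) ≠ Λ₋(α), Λ₋′(α) ≠ 0, and suppose λ₊(t, x⁻(t,α)) ≠ Λ₋(α) for all t ∈ [0,t₀) while λ₊(t, x⁻(t,α)) → Λ₋(α) as t → t₀⁻. Then |∂_x λ₋ (t, x⁻(t,α))| → +∞ as t → t₀⁻; in particular the solution cannot be extended as a C¹ solution beyond time t₀ along this characteristic. -/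
/-!
Along the characteristic `x⁻(·, a)` the invariant `λ₋` is transported, so it stays equal to
`Λ₋(a)`; differentiating this identity in `a` gives `∂ₓλ₋ · ∂ₐx⁻ = Λ₋'(a) ≠ 0`, so `∂ₐx⁻` never
vanishes. Along the same curve both `∂ₐx⁻` (by the variational equation) and `λ₊ - Λ₋(a)` (by the
equation for `λ₊`, since `λ₋ = Λ₋(a)` there) solve the linear ODE `y' = (∂ₓλ₊) y`, hence
`(Λ₊(a) - Λ₋(a)) ∂ₐx⁻ = λ₊ - Λ₋(a) → 0`, and `|∂ₓλ₋| = |Λ₋'(a)| / |∂ₐx⁻| → ∞`.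
The flow is only `C¹`, so the variational equation is obtained by differentiating the integral
form of the characteristic ODE under the integral sign rather than by exchanging derivatives.
-/

open Set Filter Topology intervalIntegral MeasureTheory

section PartialDerivatives

variable {I : Set ℝ} {f : ℝ × ℝ → ℝ} {t : ℝ}

theorem DifferentiableOn.hasDerivWithinAt_comp_graph (hf : DifferentiableOn ℝ f (I ×ˢ univ))
    (ht : t ∈ I) {γ : ℝ → ℝ} {v : ℝ} (hγ : HasDerivWithinAt γ v I t) :
    HasDerivWithinAt (fun s => f (s, γ s)) (fderivWithin ℝ f (I ×ˢ univ) (t, γ t) (1, v)) I t :=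
  (hf _ ⟨ht, mem_univ _⟩).hasFDerivWithinAt.comp_hasDerivWithinAt t
    ((hasDerivWithinAt_id t I).prodMk hγ) fun _ hs => ⟨hs, mem_univ _⟩

theorem DifferentiableOn.hasDerivAt_comp_prodMk (hf : DifferentiableOn ℝ f (I ×ˢ univ))
    (ht : t ∈ I) (x : ℝ) :
    HasDerivAt (fun y => f (t, y)) (fderivWithin ℝ f (I ×ˢ univ) (t, x) (0, 1)) x := by
  rw [← hasDerivWithinAt_univ]
  exact (hf _ ⟨ht, mem_univ _⟩).hasFDerivWithinAt.comp_hasDerivWithinAt x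
    ((hasDerivWithinAt_const x univ t).prodMk (hasDerivWithinAt_id x univ))
    fun _ _ => ⟨ht, mem_univ _⟩

theorem DifferentiableOn.differentiableAt_comp_prodMk (hf : DifferentiableOn ℝ f (I ×ˢ univ))
    (ht : t ∈ I) (x : ℝ) : DifferentiableAt ℝ (fun y => f (t, y)) x :=
  (hf.hasDerivAt_comp_prodMk ht x).differentiableAt

theorem hasDerivWithinAt_comp_graph_of_differentiableOn
    (hf : DifferentiableOn ℝ f (I ×ˢ univ)) (ht : t ∈ I) (hI : UniqueDiffWithinAt ℝ I t)
    {γ : ℝ → ℝ} {v : ℝ} (hγ : HasDerivWithinAt γ v I t) :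
    HasDerivWithinAt (fun s => f (s, γ s))
      (derivWithin (fun s => f (s, γ t)) I t + v * deriv (fun y => f (t, y)) (γ t)) I t := by
  have hv : ((1 : ℝ), v) = ((1 : ℝ), (0 : ℝ)) + v • ((0 : ℝ), (1 : ℝ)) := by simp
  rw [(hf.hasDerivWithinAt_comp_graph ht (hasDerivWithinAt_const t I (γ t))).derivWithin hI,
    (hf.hasDerivAt_comp_prodMk ht (γ t)).deriv, ← smul_eq_mul, ← map_smul, ← map_add, ← hv]
  exact hf.hasDerivWithinAt_comp_graph ht hγ

theorem continuousOn_deriv_comp_prodMk_of_contDiffOn (hf : ContDiffOn ℝ 1 f (I ×ˢ univ))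
    (hI : UniqueDiffOn ℝ I) :
    ContinuousOn (fun p : ℝ × ℝ => deriv (fun y => f (p.1, y)) p.2) (I ×ˢ univ) := by
  have hcont : ContinuousOn (fun p => fderivWithin ℝ f (I ×ˢ univ) p (0, 1)) (I ×ˢ univ) :=
    (ContinuousLinearMap.apply ℝ ℝ ((0 : ℝ), (1 : ℝ))).continuous.comp_continuousOn
      (hf.continuousOn_fderivWithin (hI.prod uniqueDiffOn_univ) le_rfl)
  exact hcont.congr fun p hp =>
    ((hf.differentiableOn one_ne_zero).hasDerivAt_comp_prodMk hp.1 p.2).deriv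

end PartialDerivatives

section Interval

variable {a b : ℝ}

theorem constant_of_has_deriv_right_zero_Ico {f : ℝ → ℝ} (hcont : ContinuousOn f (Ico a b))
    (hderiv : ∀ x ∈ Ico a b, HasDerivWithinAt f 0 (Ici x) x) {x : ℝ} (hx : x ∈ Ico a b) :
    f x = f a :=
  constant_of_has_deriv_right_zero (hcont.mono (Icc_subset_Ico_right hx.2))
    (fun y hy => hderiv y ⟨hy.1, hy.2.trans hx.2⟩) x (right_mem_Icc.2 hx.1)

theorem mul_eq_mul_of_hasDerivWithinAt_Ici_mul {p y₁ y₂ : ℝ → ℝ}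
    (hc₁ : ContinuousOn y₁ (Ico a b)) (hc₂ : ContinuousOn y₂ (Ico a b))
    (hd₁ : ∀ x ∈ Ico a b, HasDerivWithinAt y₁ (p x * y₁ x) (Ici x) x)
    (hd₂ : ∀ x ∈ Ico a b, HasDerivWithinAt y₂ (p x * y₂ x) (Ici x) x)
    (hy₁ : ∀ x ∈ Ico a b, y₁ x ≠ 0) {x : ℝ} (hx : x ∈ Ico a b) :
    y₂ x * y₁ a = y₂ a * y₁ x := by
  have hquot : (y₂ / y₁) x = (y₂ / y₁) a := by
    refine constant_of_has_deriv_right_zero_Ico (hc₂.div hc₁ hy₁) (fun s hs => ?_) hx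
    refine ((hd₂ s hs).div (hd₁ s hs) (hy₁ s hs)).congr_deriv ?_
    ring
  rw [Pi.div_apply, Pi.div_apply,
    div_eq_div_iff (hy₁ x hx) (hy₁ a ⟨le_rfl, hx.1.trans_lt hx.2⟩)] at hquot
  linear_combination hquot

theorem eq_add_integral_of_hasDerivWithinAt_Ico {X v : ℝ → ℝ} (hv : ContinuousOn v (Ico a b))
    (hX : ∀ t ∈ Ico a b, HasDerivWithinAt X (v t) (Ico a b) t) {t : ℝ} (ht : t ∈ Ico a b) :
    X t = X a + ∫ s in a..t, v s := by
  have hsub : Icc a t ⊆ Ico a b := Icc_subset_Ico_right ht.2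
  rw [integral_eq_sub_of_hasDeriv_right_of_le ht.1
    (fun s hs => (hX s (hsub hs)).continuousWithinAt.mono hsub)
    (fun s hs => (hX s (hsub (Ioo_subset_Icc_self hs))).mono_of_mem_nhdsWithin
      (Ico_mem_nhdsGE_of_mem (hsub (Ioo_subset_Icc_self hs))) |>.mono Ioi_subset_Ici_self)
    ((hv.mono hsub).intervalIntegrable_of_Icc ht.1)]
  ring

theorem hasDerivWithinAt_Ici_of_eq_add_integral {y v : ℝ → ℝ} {c : ℝ}
    (hv : ContinuousOn v (Ico a b)) (hy : ∀ t ∈ Ico a b, y t = c + ∫ s in a..t, v s)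
    {t : ℝ} (ht : t ∈ Ico a b) : HasDerivWithinAt y (v t) (Ici t) t := by
  have hnhds : Ico a b ∈ 𝓝[>] t := nhdsWithin_mono t Ioi_subset_Ici_self (Ico_mem_nhdsGE_of_mem ht)
  have hFTC := integral_hasDerivWithinAt_right (s := Ici t) (t := Ioi t)
    ((hv.mono (Icc_subset_Ico_right ht.2)).intervalIntegrable_of_Icc ht.1)
    ⟨Ico a b, hnhds, hv.aestronglyMeasurable measurableSet_Ico⟩
    ((hv t ht).mono_of_mem_nhdsWithin hnhds)
  exact (hFTC.const_add c).congr_of_eventuallyEq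
    (eventually_of_mem (Ico_mem_nhdsGE_of_mem ht) hy) (hy t ht)

theorem hasDerivAt_integral_of_continuousOn_prod {F F' : ℝ × ℝ → ℝ} (hab : a ≤ b)
    (hF : ContinuousOn F (Icc a b ×ˢ univ)) (hF' : ContinuousOn F' (Icc a b ×ˢ univ))
    (hd : ∀ s ∈ Icc a b, ∀ β, HasDerivAt (fun β => F (s, β)) (F' (s, β)) β) (x₀ : ℝ) :
    HasDerivAt (fun β => ∫ s in a..b, F (s, β)) (∫ s in a..b, F' (s, x₀)) x₀ := by
  have hslice : ∀ {G : ℝ × ℝ → ℝ}, ContinuousOn G (Icc a b ×ˢ univ) → ∀ β,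
      ContinuousOn (fun s => G (s, β)) (Icc a b) := fun hG β =>
    hG.comp (continuous_id.prodMk continuous_const).continuousOn fun _ hs => ⟨hs, mem_univ _⟩
  have hIoc : uIoc a b ⊆ Icc a b := by rw [uIoc_of_le hab]; exact Ioc_subset_Icc_self
  obtain ⟨C, hC⟩ := (isCompact_Icc.prod (isCompact_closedBall x₀ 1)).exists_bound_of_continuousOn
    (hF'.mono (prod_mono le_rfl (subset_univ _)))
  exact (hasDerivAt_integral_of_dominated_loc_of_deriv_le (Metric.ball_mem_nhds x₀ one_pos)
    (Eventually.of_forall fun β =>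
      ((hslice hF β).mono hIoc).aestronglyMeasurable measurableSet_uIoc)
    ((hslice hF x₀).intervalIntegrable_of_Icc hab)
    (((hslice hF' x₀).mono hIoc).aestronglyMeasurable measurableSet_uIoc)
    (Eventually.of_forall fun s hs β hβ => hC (s, β) ⟨hIoc hs, Metric.ball_subset_closedBall hβ⟩)
    intervalIntegrable_const
    (Eventually.of_forall fun s hs β _ => hd s (hIoc hs) β)).2

end Interval

section Characteristics

variable {T : ℝ}

theorem hasDerivWithinAt_comp_curve_of_transport {u w : ℝ × ℝ → ℝ} {X : ℝ → ℝ} {v t : ℝ}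
    (hu : DifferentiableOn ℝ u (Ico 0 T ×ˢ univ))
    (hpde : ∀ t ∈ Ico (0 : ℝ) T, ∀ x, derivWithin (fun s => u (s, x)) (Ico 0 T) t
      + w (t, x) * deriv (fun y => u (t, y)) x = 0)
    (ht : t ∈ Ico (0 : ℝ) T) (hX : HasDerivWithinAt X v (Ico 0 T) t) :
    HasDerivWithinAt (fun s => u (s, X s))
      ((v - w (t, X t)) * deriv (fun y => u (t, y)) (X t)) (Ico 0 T) t :=
  (hasDerivWithinAt_comp_graph_of_differentiableOn hu ht (uniqueDiffOn_Ico 0 T t ht)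
    hX).congr_deriv (by linear_combination hpde t ht (X t))

theorem eq_initial_of_transport_of_characteristic {u c : ℝ × ℝ → ℝ} {X : ℝ → ℝ}
    (hu : DifferentiableOn ℝ u (Ico 0 T ×ˢ univ))
    (hpde : ∀ t ∈ Ico (0 : ℝ) T, ∀ x, derivWithin (fun s => u (s, x)) (Ico 0 T) t
      + c (t, x) * deriv (fun y => u (t, y)) x = 0)
    (hX : ∀ t ∈ Ico (0 : ℝ) T, HasDerivWithinAt X (c (t, X t)) (Ico 0 T) t)
    {t : ℝ} (ht : t ∈ Ico (0 : ℝ) T) : u (t, X t) = u (0, X 0) := by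
  have hderiv : ∀ s ∈ Ico (0 : ℝ) T, HasDerivWithinAt (fun s => u (s, X s)) 0 (Ico 0 T) s :=
    fun s hs => (hasDerivWithinAt_comp_curve_of_transport hu hpde hs (hX s hs)).congr_deriv
      (by rw [sub_self, zero_mul])
  exact constant_of_has_deriv_right_zero_Ico (fun s hs => (hderiv s hs).continuousWithinAt)
    (fun s hs => (hderiv s hs).mono_of_mem_nhdsWithin (Ico_mem_nhdsGE_of_mem hs)) ht

theorem deriv_mul_deriv_flow_eq_deriv_initial {u c X : ℝ × ℝ → ℝ} {U : ℝ → ℝ}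
    (hu : DifferentiableOn ℝ u (Ico 0 T ×ˢ univ)) (hX : DifferentiableOn ℝ X (Ico 0 T ×ˢ univ))
    (hU : ∀ x, u (0, x) = U x) (hX0 : ∀ α, X (0, α) = α)
    (hpde : ∀ t ∈ Ico (0 : ℝ) T, ∀ x, derivWithin (fun s => u (s, x)) (Ico 0 T) t
      + c (t, x) * deriv (fun y => u (t, y)) x = 0)
    (hXode : ∀ t ∈ Ico (0 : ℝ) T, ∀ α,
      HasDerivWithinAt (fun s => X (s, α)) (c (t, X (t, α))) (Ico 0 T) t)
    (α : ℝ) {t : ℝ} (ht : t ∈ Ico (0 : ℝ) T) :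
    deriv (fun y => u (t, y)) (X (t, α)) * deriv (fun β => X (t, β)) α = deriv U α := by
  have h := (hu.differentiableAt_comp_prodMk ht _).hasDerivAt.comp α
    (hX.differentiableAt_comp_prodMk ht α).hasDerivAt
  have hconst : ((fun y => u (t, y)) ∘ fun β => X (t, β)) = U := funext fun β => by
    rw [Function.comp_apply, eq_initial_of_transport_of_characteristic hu hpde
      (fun s hs => hXode s hs β) ht, hX0, hU]
  rw [hconst] at h
  exact h.deriv.symm

variable {c X : ℝ × ℝ → ℝ}

theorem continuousOn_deriv_comp_mul_deriv (hc : ContDiffOn ℝ 1 c (Ico 0 T ×ˢ univ))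
    (hX : ContDiffOn ℝ 1 X (Ico 0 T ×ˢ univ)) :
    ContinuousOn (fun p : ℝ × ℝ =>
      deriv (fun y => c (p.1, y)) (X p) * deriv (fun β => X (p.1, β)) p.2) (Ico 0 T ×ˢ univ) :=
  ((continuousOn_deriv_comp_prodMk_of_contDiffOn hc (uniqueDiffOn_Ico 0 T)).comp
      (continuousOn_fst.prodMk hX.continuousOn) fun _ hp => ⟨hp.1, mem_univ _⟩).mul
    (continuousOn_deriv_comp_prodMk_of_contDiffOn hX (uniqueDiffOn_Ico 0 T))

theorem deriv_flow_eq_one_add_integral (hc : ContDiffOn ℝ 1 c (Ico 0 T ×ˢ univ))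
    (hX : ContDiffOn ℝ 1 X (Ico 0 T ×ˢ univ)) (hX0 : ∀ α, X (0, α) = α)
    (hXode : ∀ t ∈ Ico (0 : ℝ) T, ∀ α,
      HasDerivWithinAt (fun s => X (s, α)) (c (t, X (t, α))) (Ico 0 T) t)
    (α : ℝ) {t : ℝ} (ht : t ∈ Ico (0 : ℝ) T) :
    deriv (fun β => X (t, β)) α = 1 + ∫ s in (0 : ℝ)..t,
      deriv (fun y => c (s, y)) (X (s, α)) * deriv (fun β => X (s, β)) α := by
  have hsub : Icc 0 t ⊆ Ico 0 T := Icc_subset_Ico_right ht.2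
  have hF : ContinuousOn (fun p : ℝ × ℝ => c (p.1, X p)) (Ico 0 T ×ˢ univ) :=
    hc.continuousOn.comp (continuousOn_fst.prodMk hX.continuousOn) fun _ hp => ⟨hp.1, mem_univ _⟩
  have hrep : (fun β => X (t, β)) = fun β => β + ∫ s in (0 : ℝ)..t, c (s, X (s, β)) := by
    funext β
    rw [eq_add_integral_of_hasDerivWithinAt_Ico (hF.uncurry_right (f := fun s β => c (s, X (s, β)))
      β (mem_univ β)) (fun s hs => hXode s hs β) ht, hX0]
  have hd : ∀ s ∈ Icc 0 t, ∀ β, HasDerivAt (fun β => c (s, X (s, β)))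
      (deriv (fun y => c (s, y)) (X (s, β)) * deriv (fun β => X (s, β)) β) β := fun s hs β =>
    ((hc.differentiableOn one_ne_zero).differentiableAt_comp_prodMk (hsub hs) _).hasDerivAt.comp β
      ((hX.differentiableOn one_ne_zero).differentiableAt_comp_prodMk (hsub hs) β).hasDerivAt
  have hsub' : Icc 0 t ×ˢ (univ : Set ℝ) ⊆ Ico 0 T ×ˢ univ := prod_mono hsub subset_rfl
  rw [hrep]
  exact ((hasDerivAt_id' α).add (hasDerivAt_integral_of_continuousOn_prod ht.1 (hF.mono hsub')
    ((continuousOn_deriv_comp_mul_deriv hc hX).mono hsub') hd α)).deriv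

theorem hasDerivWithinAt_Ici_deriv_flow (hc : ContDiffOn ℝ 1 c (Ico 0 T ×ˢ univ))
    (hX : ContDiffOn ℝ 1 X (Ico 0 T ×ˢ univ)) (hX0 : ∀ α, X (0, α) = α)
    (hXode : ∀ t ∈ Ico (0 : ℝ) T, ∀ α,
      HasDerivWithinAt (fun s => X (s, α)) (c (t, X (t, α))) (Ico 0 T) t)
    (α : ℝ) {t : ℝ} (ht : t ∈ Ico (0 : ℝ) T) :
    HasDerivWithinAt (fun s => deriv (fun β => X (s, β)) α)
      (deriv (fun y => c (t, y)) (X (t, α)) * deriv (fun β => X (t, β)) α) (Ici t) t :=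
  hasDerivWithinAt_Ici_of_eq_add_integral
    ((continuousOn_deriv_comp_mul_deriv hc hX).uncurry_right
      (f := fun s β => deriv (fun y => c (s, y)) (X (s, β)) * deriv (fun β => X (s, β)) β)
      α (mem_univ α))
    (fun _ hs => deriv_flow_eq_one_add_integral hc hX hX0 hXode α hs) ht

end Characteristics

theorem tendsto_abs_atTop_of_mul_eq_const {α : Type*} {l : Filter α} {w z : α → ℝ} {c : ℝ}
    (hc : c ≠ 0) (hwz : ∀ᶠ x in l, w x * z x = c) (hz : Tendsto z l (𝓝 0)) :
    Tendsto (fun x => |w x|) l atTop := by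
  have hz_ne : ∀ᶠ x in l, z x ≠ 0 := hwz.mono fun x hx h0 => hc (by rw [← hx, h0, mul_zero])
  refine ((tendsto_norm_inv_nhdsNE_zero_atTop.comp
    (tendsto_nhdsWithin_iff.2 ⟨hz, hz_ne⟩)).const_mul_atTop (abs_pos.2 hc)).congr' ?_
  filter_upwards [hwz, hz_ne] with x hx hx0
  rw [← hx, Function.comp_apply, Real.norm_eq_abs, abs_mul, abs_inv, mul_assoc,
    mul_inv_cancel₀ (abs_ne_zero.2 hx0), mul_one]

theorem gradient_blowup_along_characteristic_general
    (t₀ : ℝ) (ht₀ : 0 < t₀)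
    (Lm Lp : ℝ → ℝ)
    (lm lp : ℝ × ℝ → ℝ)
    (hlm : ContDiffOn ℝ 1 lm (Ico 0 t₀ ×ˢ (univ : Set ℝ)))
    (hlp : ContDiffOn ℝ 1 lp (Ico 0 t₀ ×ˢ (univ : Set ℝ)))
    (hinit : ∀ x : ℝ, lm (0, x) = Lm x ∧ lp (0, x) = Lp x)
    (sys1 : ∀ t ∈ Ico (0:ℝ) t₀, ∀ x : ℝ,
      derivWithin (fun s => lm (s, x)) (Ico 0 t₀) t
        + lp (t, x) * deriv (fun y => lm (t, y)) x = 0)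
    (sys2 : ∀ t ∈ Ico (0:ℝ) t₀, ∀ x : ℝ,
      derivWithin (fun s => lp (s, x)) (Ico 0 t₀) t
        + lm (t, x) * deriv (fun y => lp (t, y)) x = 0)
    (xm : ℝ × ℝ → ℝ)
    (hxmC1 : ContDiffOn ℝ 1 xm (Ico 0 t₀ ×ˢ (univ : Set ℝ)))
    (hxm0 : ∀ a : ℝ, xm (0, a) = a)
    (hxmode : ∀ t ∈ Ico (0:ℝ) t₀, ∀ a : ℝ,
      HasDerivWithinAt (fun s => xm (s, a)) (lp (t, xm (t, a))) (Ico 0 t₀) t)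
    (a : ℝ) (hne : Lp a ≠ Lm a) (hLm' : deriv Lm a ≠ 0)
    (hmerge : Tendsto (fun t => lp (t, xm (t, a))) (𝓝[<] t₀) (𝓝 (Lm a))) :
    Tendsto (fun t => |deriv (fun y => lm (t, y)) (xm (t, a))|) (𝓝[<] t₀) atTop := by
  have hlm_diff := hlm.differentiableOn one_ne_zero
  set z : ℝ → ℝ := fun t => deriv (fun β => xm (t, β)) a
  set g : ℝ → ℝ := fun t => lp (t, xm (t, a)) - Lm a
  have hgrad : ∀ t ∈ Ico (0 : ℝ) t₀, deriv (fun y => lm (t, y)) (xm (t, a)) * z t = deriv Lm a :=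
    fun t ht => deriv_mul_deriv_flow_eq_deriv_initial hlm_diff (hxmC1.differentiableOn one_ne_zero)
      (fun x => (hinit x).1) hxm0 sys1 hxmode a ht
  have hg : ∀ t ∈ Ico (0 : ℝ) t₀,
      HasDerivWithinAt g (deriv (fun y => lp (t, y)) (xm (t, a)) * g t) (Ico 0 t₀) t := by
    intro t ht
    have hlm_char : lm (t, xm (t, a)) = Lm a := by
      rw [eq_initial_of_transport_of_characteristic hlm_diff sys1 (fun s hs => hxmode s hs a) ht,
        hxm0, (hinit a).1]
    refine ((hasDerivWithinAt_comp_curve_of_transport (hlp.differentiableOn one_ne_zero) sys2 ht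
      (hxmode t ht a)).sub_const (Lm a)).congr_deriv ?_
    rw [hlm_char, mul_comm]
  have hz_ne : ∀ t ∈ Ico (0 : ℝ) t₀, z t ≠ 0 :=
    fun t ht h0 => hLm' (by rw [← hgrad t ht, h0, mul_zero])
  have hprop : ∀ t ∈ Ico (0 : ℝ) t₀, g t * z 0 = g 0 * z t :=
    fun t ht => mul_eq_mul_of_hasDerivWithinAt_Ici_mul
      ((continuousOn_deriv_comp_prodMk_of_contDiffOn hxmC1 (uniqueDiffOn_Ico 0 t₀)).uncurry_right
        (f := fun s β => deriv (fun β => xm (s, β)) β) a (mem_univ a))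
      (fun s hs => (hg s hs).continuousWithinAt)
      (fun s hs => hasDerivWithinAt_Ici_deriv_flow hlp hxmC1 hxm0 hxmode a hs)
      (fun s hs => (hg s hs).mono_of_mem_nhdsWithin (Ico_mem_nhdsGE_of_mem hs))
      hz_ne ht
  have hz0 : z 0 = 1 := by simp [z, hxm0]
  have hg0 : g 0 = Lp a - Lm a := by simp [g, hxm0, hinit]
  have hz_lim : Tendsto z (𝓝[<] t₀) (𝓝 0) := by
    have hg_lim : Tendsto g (𝓝[<] t₀) (𝓝 0) := by simpa using hmerge.sub_const (Lm a)
    refine (zero_div (Lp a - Lm a) ▸ hg_lim.div_const (Lp a - Lm a)).congr' ?_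
    filter_upwards [Ico_mem_nhdsLT ht₀] with t ht
    rw [div_eq_iff (sub_ne_zero.2 hne), ← hg0, mul_comm, ← hprop t ht, hz0, mul_one]
  exact tendsto_abs_atTop_of_mul_eq_const hLm' (eventually_of_mem (Ico_mem_nhdsLT ht₀) hgrad) hz_lim

/-- Blowup of the spatial gradient of `λ₋` along the characteristic `x⁻(t,α)` when the
characteristic speeds of the two families merge as `t → t₀⁻` (Remark 2.1). -/
theorem gradient_blowup_along_characteristic
    (t₀ : ℝ) (ht₀ : 0 < t₀)
    (Lm Lp : ℝ → ℝ) (hLm : ContDiff ℝ 1 Lm) (hLp : ContDiff ℝ 1 Lp)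
    (lm lp : ℝ × ℝ → ℝ)
    (hlm : ContDiffOn ℝ 1 lm (Ico 0 t₀ ×ˢ (univ : Set ℝ)))
    (hlp : ContDiffOn ℝ 1 lp (Ico 0 t₀ ×ˢ (univ : Set ℝ)))
    (hinit : ∀ x : ℝ, lm (0, x) = Lm x ∧ lp (0, x) = Lp x)
    (sys1 : ∀ t ∈ Ico (0:ℝ) t₀, ∀ x : ℝ,
      derivWithin (fun s => lm (s, x)) (Ico 0 t₀) t
        + lp (t, x) * deriv (fun y => lm (t, y)) x = 0)
    (sys2 : ∀ t ∈ Ico (0:ℝ) t₀, ∀ x : ℝ,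
      derivWithin (fun s => lp (s, x)) (Ico 0 t₀) t
        + lm (t, x) * deriv (fun y => lp (t, y)) x = 0)
    (xm : ℝ × ℝ → ℝ)
    (hxmC1 : ContDiffOn ℝ 1 xm (Ico 0 t₀ ×ˢ (univ : Set ℝ)))
    (hxm0 : ∀ a : ℝ, xm (0, a) = a)
    (hxmode : ∀ t ∈ Ico (0:ℝ) t₀, ∀ a : ℝ,
      HasDerivWithinAt (fun s => xm (s, a)) (lp (t, xm (t, a))) (Ico 0 t₀) t)
    (a : ℝ) (hne : Lp a ≠ Lm a) (hLm' : deriv Lm a ≠ 0)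
    (hnever : ∀ t ∈ Ico (0:ℝ) t₀, lp (t, xm (t, a)) ≠ Lm a)
    (hmerge : Tendsto (fun t => lp (t, xm (t, a))) (𝓝[<] t₀) (𝓝 (Lm a))) :
    Tendsto (fun t => |deriv (fun y => lm (t, y)) (xm (t, a))|) (𝓝[<] t₀) atTop :=
  gradient_blowup_along_characteristic_general t₀ ht₀ Lm Lp lm lp hlm hlp hinit sys1 sys2 xm hxmC1
    hxm0 hxmode a hne hLm' hmerge
end

section
/- There exist C² functions Λ₋, Λ₊ : ℝ → ℝ with bounded C² norms and real numbers α₀ < β₀ satisfying all of the assumptions (H1)–(H5): (H1) Λ₋(x) < Λ₊(x) for all x ∈ ℝ; (H2) Λ₋′(x) < 0 and Λ₊′(x) < 0 for all x ∈ ℝ; (H3) Λ₋(α₀) = Λ₊(β₀) = 0; (H4) f(α₀) = 0; (H5) f′(α₀) < 0, where β(α) := Λ₊⁻¹(Λ₋(α)) and f(α) := Λ₋′(α)/(Λ₊(β(α)) − Λ₋(β(α))) − Λ₊′(β(α))/(Λ₊(α) − Λ₋(α)). -/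
/-!
Take `Λ₋ = -arctan` and `Λ₊ = Λ₋ (· - 1)`, so that `β α = α + 1`. For an odd profile `L` and its
translate by `c`, `f α = L' α * ((L α - L (α + c))⁻¹ - (L (α - c) - L α)⁻¹)`. Oddness makes the two
denominators agree at `α = 0`, which gives (H4), and `f' 0 = 2 L' 0 (L' c - L' 0) / (L c)²`,
which is negative, i.e. (H5), because `|arctan'|` is largest at `0`.
-/

open Set Real

/-- The function `f` of assumptions (H4)–(H5) for the data `Λ₋ = Lm`, `Λ₊ = Lp`, `β = bf`. -/
noncomputable def initialDataF (Lm Lp bf : ℝ → ℝ) (a : ℝ) : ℝ :=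
  deriv Lm a / (Lp (bf a) - Lm (bf a)) - deriv Lp (bf a) / (Lp a - Lm a)

lemma Function.Odd.hasDerivAt_neg {L : ℝ → ℝ} {d x : ℝ} (hL : L.Odd) (h : HasDerivAt L d x) :
    HasDerivAt L d (-x) := by
  have hL' : (fun y => -L (0 - y)) = L := funext fun y => by rw [zero_sub, hL.eq, neg_neg]
  have h' := (HasDerivAt.comp_const_sub 0 (-x) (by rwa [sub_neg_eq_add, zero_add])).fun_neg
  rwa [neg_neg, hL'] at h'

section Translate

variable {L : ℝ → ℝ} {c : ℝ}

lemma deriv_comp_sub_const_eq (L : ℝ → ℝ) (c : ℝ) :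
    deriv (fun x => L (x - c)) = fun x => deriv L (x - c) :=
  funext (deriv_comp_sub_const L c)

lemma initialDataF_translate (L : ℝ → ℝ) (c : ℝ) :
    initialDataF L (fun x => L (x - c)) (· + c)
      = fun a => deriv L a * ((L a - L (a + c))⁻¹ - (L (a - c) - L a)⁻¹) := by
  funext a
  simp only [initialDataF, deriv_comp_sub_const_eq, add_sub_cancel_right]
  ring

lemma initialDataF_translate_zero (hL : L.Odd) :
    initialDataF L (fun x => L (x - c)) (· + c) 0 = 0 := by
  simp [initialDataF_translate, hL.map_zero, hL.eq]

lemma hasDerivAt_initialDataF_translate (hL : L.Odd) (hL₁ : Differentiable ℝ L)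
    (hL₂ : DifferentiableAt ℝ (deriv L) 0) (hc : L c ≠ 0) :
    HasDerivAt (initialDataF L (fun x => L (x - c)) (· + c))
      (2 * deriv L 0 * (deriv L c - deriv L 0) / L c ^ 2) 0 := by
  have h0 := (hL₁ 0).hasDerivAt
  have hright : HasDerivAt (fun a => L (a + c)) (deriv L c) 0 :=
    HasDerivAt.comp_add_const 0 c (by simpa using (hL₁ c).hasDerivAt)
  have hleft : HasDerivAt (fun a => L (a - c)) (deriv L c) 0 :=
    HasDerivAt.comp_sub_const 0 c (by simpa using hL.hasDerivAt_neg (hL₁ c).hasDerivAt)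
  have hne : -L c ≠ 0 := neg_ne_zero.mpr hc
  have hu : HasDerivAt (fun a => (L a - L (a + c))⁻¹) (-(deriv L 0 - deriv L c) / L c ^ 2) 0 := by
    simpa [hL.map_zero] using (h0.fun_sub hright).fun_inv (by simpa [hL.map_zero] using hne)
  have hv : HasDerivAt (fun a => (L (a - c) - L a)⁻¹) (-(deriv L c - deriv L 0) / L c ^ 2) 0 := by
    simpa [hL.map_zero, hL.eq] using
      (hleft.fun_sub h0).fun_inv (by simpa [hL.map_zero, hL.eq] using hne)
  rw [initialDataF_translate]
  refine (hL₂.hasDerivAt.fun_mul (hu.fun_sub hv)).congr_deriv ?_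
  rw [zero_add, zero_sub, hL.eq, hL.map_zero, zero_sub, sub_zero, sub_self, mul_zero, zero_add]
  ring

lemma deriv_initialDataF_translate_neg (hL : L.Odd) (hL₁ : Differentiable ℝ L)
    (hL₂ : DifferentiableAt ℝ (deriv L) 0) (hc : L c ≠ 0) (hd₀ : deriv L 0 < 0)
    (hdc : deriv L 0 < deriv L c) :
    deriv (initialDataF L (fun x => L (x - c)) (· + c)) 0 < 0 := by
  rw [(hasDerivAt_initialDataF_translate hL hL₁ hL₂ hc).deriv]
  exact div_neg_of_neg_of_pos (by nlinarith) (by positivity)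

end Translate

noncomputable def negArctan (x : ℝ) : ℝ := -arctan x

lemma negArctan_odd : negArctan.Odd := fun x => by simp [negArctan, arctan_neg]

lemma strictAnti_negArctan : StrictAnti negArctan := fun _ _ h => neg_lt_neg (arctan_strictMono h)

lemma contDiff_negArctan : ContDiff ℝ 2 negArctan := contDiff_arctan.neg

lemma deriv_negArctan : deriv negArctan = fun x => -(1 + x ^ 2)⁻¹ :=
  funext fun x => (hasDerivAt_arctan' x).neg.deriv

lemma deriv_negArctan_neg (x : ℝ) : deriv negArctan x < 0 := by
  rw [deriv_negArctan, neg_lt_zero]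
  positivity

lemma hasDerivAt_deriv_negArctan (x : ℝ) :
    HasDerivAt (deriv negArctan) (2 * x / (1 + x ^ 2) ^ 2) x := by
  rw [deriv_negArctan]
  have h : HasDerivAt (fun x : ℝ => 1 + x ^ 2) (2 * x) x := by
    simpa using (hasDerivAt_pow 2 x).const_add 1
  exact (h.fun_inv (by positivity)).fun_neg.congr_deriv (by ring)

lemma abs_negArctan_C2_le (x : ℝ) :
    |negArctan x| ≤ 2 ∧ |deriv negArctan x| ≤ 2 ∧ |deriv (deriv negArctan) x| ≤ 2 := by
  have hpos : 0 < 1 + x ^ 2 := by positivity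
  have hone : 1 ≤ 1 + x ^ 2 := by nlinarith
  refine ⟨?_, ?_, ?_⟩
  · rw [negArctan, abs_neg, abs_le]
    constructor <;> linarith [arctan_lt_pi_div_two x, neg_pi_div_two_lt_arctan x, pi_le_four]
  · rw [deriv_negArctan, abs_neg, abs_of_pos (inv_pos.mpr hpos)]
    linarith [inv_le_one_of_one_le₀ hone]
  · rw [(hasDerivAt_deriv_negArctan x).deriv, abs_div, abs_mul, abs_two,
      abs_of_pos (pow_pos hpos 2), div_le_iff₀ (pow_pos hpos 2)]
    nlinarith [sq_abs x, abs_nonneg x, sq_nonneg (|x| - 1)]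

/-- Lemma 2.4: the set of initial data satisfying assumptions (H1)–(H5) is not empty. -/
theorem initial_data_satisfying_H1_H5_exists :
    ∃ (Lm Lp bf : ℝ → ℝ) (α₀ β₀ : ℝ),
      ContDiff ℝ 2 Lm ∧ ContDiff ℝ 2 Lp ∧
      (∃ C : ℝ, ∀ x : ℝ,
        |Lm x| ≤ C ∧ |deriv Lm x| ≤ C ∧ |deriv (deriv Lm) x| ≤ C ∧
        |Lp x| ≤ C ∧ |deriv Lp x| ≤ C ∧ |deriv (deriv Lp) x| ≤ C) ∧
      α₀ < β₀ ∧
      -- (H1)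
      (∀ x : ℝ, Lm x < Lp x) ∧
      -- (H2)
      (∀ x : ℝ, deriv Lm x < 0 ∧ deriv Lp x < 0) ∧
      -- (H3)
      Lm α₀ = 0 ∧ Lp β₀ = 0 ∧
      -- β(α) = Λ₊⁻¹(Λ₋(α))
      (∀ a : ℝ, Lp (bf a) = Lm a) ∧ bf α₀ = β₀ ∧
      -- (H4)
      (fun a => deriv Lm a / (Lp (bf a) - Lm (bf a))
          - deriv Lp (bf a) / (Lp a - Lm a)) α₀ = 0 ∧
      -- (H5)
      deriv (fun a => deriv Lm a / (Lp (bf a) - Lm (bf a))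
          - deriv Lp (bf a) / (Lp a - Lm a)) α₀ < 0 := by
  have hdiff : Differentiable ℝ negArctan := contDiff_negArctan.differentiable two_ne_zero
  refine ⟨negArctan, fun x => negArctan (x - 1), (· + 1), 0, 1, contDiff_negArctan,
    contDiff_negArctan.comp (contDiff_id.sub contDiff_const), ⟨2, fun x => ?_⟩, one_pos,
    fun x => strictAnti_negArctan (sub_lt_self x one_pos),
    fun x => ⟨deriv_negArctan_neg x, by rw [deriv_comp_sub_const]; exact deriv_negArctan_neg _⟩,
    negArctan_odd.map_zero, by simp only [sub_self, negArctan_odd.map_zero],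
    fun a => by simp only [add_sub_cancel_right], zero_add 1,
    initialDataF_translate_zero negArctan_odd,
    deriv_initialDataF_translate_neg negArctan_odd hdiff
      (hasDerivAt_deriv_negArctan 0).differentiableAt (by simp [negArctan, arctan_one, pi_ne_zero])
      (deriv_negArctan_neg 0) (by norm_num [deriv_negArctan])⟩
  obtain ⟨h₀, h₁, h₂⟩ := abs_negArctan_C2_le x
  obtain ⟨h₀', h₁', h₂'⟩ := abs_negArctan_C2_le (x - 1)
  simp only [deriv_comp_sub_const_eq]
  exact ⟨h₀, h₁, h₂, h₀', h₁', h₂'⟩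
end

section
/- Let Λ₋, Λ₊ : ℝ → ℝ be C¹ with Λ₋ < Λ₊ everywhere and Λ₋′ < 0, Λ₊′ < 0, and let α₀ < β₀ satisfy Λ₋(α₀) = Λ₊(β₀). Set t₀ = ∫_{α₀}^{β₀} dζ/(Λ₊(ζ) − Λ₋(ζ)). Let λ₋, λ₊ : [0,T) × ℝ → ℝ be a C¹ solution of the diagonal system (∗) with λ₋(0,·) = Λ₋, λ₊(0,·) = Λ₊ and λ₋ < λ₊ on [0,T) × ℝ, and suppose the characteristics x⁻(·,α₀) (solving dx/dt = λ₊(t,x), x(0) = α₀) and x⁺(·,β₀) (solving dx/dt = λ₋(t,x), x(0) = β₀) are defined on [0,T). If T > t₀, then there exists t* with 0 < t* ≤ t₀ such that x⁻(t*,α₀) = x⁺(t*,β₀); i.e., the two characteristics of different families starting from α₀ and β₀ intersect in finite time. -/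
/-!
The density `w = 1 / (λ₊ - λ₋)` obeys the conservation law `∂ₜ w + ∂ₓ (λ₋ w) = 0`, a consequence
of the diagonal system. So the mass `φ t = ∫_{x⁻(t)}^{x⁺(t)} w(t, x) dx` between the two
characteristics changes only through the flux at the endpoints: the right endpoint moves with
speed `λ₋` and sees no flux, while the left one moves with speed `λ₊` and loses
`w (λ₊ - λ₋) = 1` per unit time. Hence `φ t = t₀ - t`, which vanishes at `t₀`; but `φ t₀ > 0`
as long as the characteristics have not met.
-/

open Set Filter Topology

theorem ContinuousLinearMap.apply_pair (L : ℝ × ℝ →L[ℝ] ℝ) (p q : ℝ) :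
    L (p, q) = p * L (1, 0) + q * L (0, 1) := by
  have : ((p, q) : ℝ × ℝ) = p • (1, 0) + q • (0, 1) := by ext <;> simp
  rw [this, map_add, map_smul, map_smul, smul_eq_mul, smul_eq_mul]

section Slices

variable {f : ℝ × ℝ → ℝ} {L : ℝ × ℝ →L[ℝ] ℝ} {γ : ℝ → ℝ}

theorem HasFDerivAt.comp_hasDerivAt_graph {t v : ℝ} (hf : HasFDerivAt f L (t, γ t))
    (hγ : HasDerivAt γ v t) : HasDerivAt (fun s => f (s, γ s)) (L (1, v)) t :=
  hf.comp_hasDerivAt (f := fun s => (s, γ s)) t ((hasDerivAt_id t).prodMk hγ)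

theorem HasFDerivAt.comp_hasDerivAt_vertical {t y v : ℝ} (hf : HasFDerivAt f L (t, γ y))
    (hγ : HasDerivAt γ v y) : HasDerivAt (fun σ => f (t, γ σ)) (L (0, v)) y :=
  hf.comp_hasDerivAt (f := fun σ => (t, γ σ)) y ((hasDerivAt_const y t).prodMk hγ)

theorem HasFDerivAt.derivWithin_slice_fst {t x : ℝ} (hf : HasFDerivAt f L (t, x)) {s : Set ℝ}
    (hs : s ∈ 𝓝 t) : derivWithin (fun r => f (r, x)) s t = L (1, 0) := by
  rw [derivWithin_of_mem_nhds hs]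
  exact (hf.comp_hasDerivAt_graph (hasDerivAt_const t x)).deriv

theorem HasFDerivAt.deriv_slice_snd {t x : ℝ} (hf : HasFDerivAt f L (t, x)) :
    deriv (fun y => f (t, y)) x = L (0, 1) :=
  (hf.comp_hasDerivAt_vertical (hasDerivAt_id x)).deriv

end Slices

theorem hasDerivAt_intervalIntegral_of_continuousOn_s7 {U : Set ℝ} (hU : IsOpen U)
    {F G : ℝ → ℝ → ℝ} {a b : ℝ} (hF : ∀ t ∈ U, ContinuousOn (F t) (uIcc a b))
    (hG : ContinuousOn (Function.uncurry G) (U ×ˢ uIcc a b))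
    (hFG : ∀ t ∈ U, ∀ τ ∈ uIcc a b, HasDerivAt (fun s => F s τ) (G t τ) t)
    {t : ℝ} (ht : t ∈ U) :
    HasDerivAt (fun s => ∫ τ in a..b, F s τ) (∫ τ in a..b, G t τ) t := by
  obtain ⟨ε, hε, hεU⟩ := Metric.nhds_basis_closedBall.mem_iff.1 (hU.mem_nhds ht)
  obtain ⟨C, hC⟩ := ((isCompact_closedBall t ε).prod isCompact_uIcc).exists_bound_of_continuousOn
    (hG.mono (prod_mono hεU subset_rfl))
  have hball : Metric.ball t ε ⊆ U := Metric.ball_subset_closedBall.trans hεU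
  refine (intervalIntegral.hasDerivAt_integral_of_dominated_loc_of_deriv_le
    (bound := fun _ => C) (Metric.ball_mem_nhds t hε) ?_ ((hF t ht).intervalIntegrable) ?_ ?_
    intervalIntegrable_const ?_).2
  · filter_upwards [hU.mem_nhds ht] with s hs
    exact ((hF s hs).mono uIoc_subset_uIcc).aestronglyMeasurable measurableSet_uIoc
  · exact ((hG.comp (continuousOn_const.prodMk continuousOn_id) fun τ hτ => ⟨ht, hτ⟩).mono
      uIoc_subset_uIcc).aestronglyMeasurable measurableSet_uIoc
  · exact MeasureTheory.ae_of_all _ fun τ hτ s hs =>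
      hC (s, τ) ⟨Metric.ball_subset_closedBall hs, uIoc_subset_uIcc hτ⟩
  · exact MeasureTheory.ae_of_all _ fun τ hτ s hs => hFG s (hball hs) τ (uIoc_subset_uIcc hτ)

theorem continuousOn_intervalIntegral_between {s : Set ℝ} {w : ℝ × ℝ → ℝ} {a b : ℝ → ℝ}
    (hw : ContinuousOn w (s ×ˢ univ)) (ha : ContinuousOn a s) (hb : ContinuousOn b s) :
    ContinuousOn (fun t => ∫ x in a t..b t, w (t, x)) s := by
  rw [continuousOn_iff_continuous_domRestrict] at ha hb ⊢
  have hw' : Continuous (Function.uncurry fun (t : s) x => w (t, x)) :=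
    hw.comp_continuous (continuous_subtype_val.prodMap continuous_id) fun p => ⟨p.1.2, trivial⟩
  have hint (t : s) (c d : ℝ) : IntervalIntegrable (fun x => w (t, x)) MeasureTheory.volume c d :=
    (hw'.uncurry_left t).intervalIntegrable c d
  have hsplit : (s.domRestrict fun t => ∫ x in a t..b t, w (t, x)) = fun t : s =>
      (∫ x in (0 : ℝ)..b t, w (t, x)) - ∫ x in (0 : ℝ)..a t, w (t, x) := by
    ext t
    exact (intervalIntegral.integral_interval_sub_left (hint t _ _) (hint t _ _)).symm
  rw [hsplit]
  exact (intervalIntegral.continuous_parametric_intervalIntegral_of_continuous hw' hb).sub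
    (intervalIntegral.continuous_parametric_intervalIntegral_of_continuous hw' ha)

theorem intervalIntegral.integral_eq_integral_zero_one (g : ℝ → ℝ) (a b : ℝ) :
    ∫ x in a..b, g x = ∫ τ in (0 : ℝ)..1, (b - a) * g ((b - a) * τ + a) := by
  rw [intervalIntegral.integral_const_mul, ← smul_eq_mul,
    intervalIntegral.smul_integral_comp_mul_add g]
  simp

section ConservationLaw

variable {U : Set ℝ} {w f : ℝ × ℝ → ℝ} {a b a' b' : ℝ → ℝ}

theorem continuousOn_deriv_rescaledIntegrand (hU : IsOpen U)
    (hw : ContDiffOn ℝ 1 w (U ×ˢ univ)) (ha : ContinuousOn a U) (hb : ContinuousOn b U)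
    (ha' : ContinuousOn a' U) (hb' : ContinuousOn b' U) :
    ContinuousOn (Function.uncurry fun s τ => (b' s - a' s) * w (s, (b s - a s) * τ + a s)
      + (b s - a s) * fderiv ℝ w (s, (b s - a s) * τ + a s) (1, (b' s - a' s) * τ + a' s))
      (U ×ˢ univ) := by
  have fst {g : ℝ → ℝ} (hg : ContinuousOn g U) :
      ContinuousOn (fun q : ℝ × ℝ => g q.1) (U ×ˢ univ) :=
    hg.comp continuousOn_fst fun q hq => hq.1
  have hpt : ContinuousOn (fun q : ℝ × ℝ => (q.1, (b q.1 - a q.1) * q.2 + a q.1)) (U ×ˢ univ) :=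
    continuousOn_fst.prodMk ((((fst hb).sub (fst ha)).mul continuousOn_snd).add (fst ha))
  have hmaps : MapsTo (fun q : ℝ × ℝ => (q.1, (b q.1 - a q.1) * q.2 + a q.1)) (U ×ˢ univ)
      (U ×ˢ univ) := fun q hq => ⟨hq.1, trivial⟩
  refine (((fst hb').sub (fst ha')).mul (hw.continuousOn.comp hpt hmaps)).add
    (((fst hb).sub (fst ha)).mul (ContinuousOn.clm_apply ?_ ?_))
  · exact (hw.continuousOn_fderiv_of_isOpen (hU.prod isOpen_univ) le_rfl).comp hpt hmaps
  · exact continuousOn_const.prodMk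
      ((((fst hb').sub (fst ha')).mul continuousOn_snd).add (fst ha'))

theorem hasDerivAt_rescaledIntegrand {s τ : ℝ} (ha : HasDerivAt a (a' s) s)
    (hb : HasDerivAt b (b' s) s)
    (hw : DifferentiableAt ℝ w (s, (b s - a s) * τ + a s)) :
    HasDerivAt (fun r => (b r - a r) * w (r, (b r - a r) * τ + a r))
      ((b' s - a' s) * w (s, (b s - a s) * τ + a s)
        + (b s - a s) * fderiv ℝ w (s, (b s - a s) * τ + a s) (1, (b' s - a' s) * τ + a' s)) s :=
  (hb.fun_sub ha).fun_mul (hw.hasFDerivAt.comp_hasDerivAt_graph ((hb.sub ha).mul_const τ |>.add ha))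

/-- Where the conservation law enters: along the segment, `v * w - f` is a `τ`-antiderivative of
the time derivative of the rescaled integrand computed in `hasDerivAt_rescaledIntegrand`. -/
theorem hasDerivAt_flux_along_segment {t τ : ℝ}
    (hw : DifferentiableAt ℝ w (t, (b t - a t) * τ + a t))
    (hf : DifferentiableAt ℝ f (t, (b t - a t) * τ + a t))
    (hcons : fderiv ℝ w (t, (b t - a t) * τ + a t) (1, 0)
      + fderiv ℝ f (t, (b t - a t) * τ + a t) (0, 1) = 0) :
    HasDerivAt (fun σ => ((b' t - a' t) * σ + a' t) * w (t, (b t - a t) * σ + a t)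
        - f (t, (b t - a t) * σ + a t))
      ((b' t - a' t) * w (t, (b t - a t) * τ + a t)
        + (b t - a t) * fderiv ℝ w (t, (b t - a t) * τ + a t) (1, (b' t - a' t) * τ + a' t)) τ := by
  have hc : HasDerivAt (fun σ => (b t - a t) * σ + a t) (b t - a t) τ := by
    simpa using ((hasDerivAt_id τ).const_mul (b t - a t)).add_const (a t)
  have hv : HasDerivAt (fun σ => (b' t - a' t) * σ + a' t) (b' t - a' t) τ := by
    simpa using ((hasDerivAt_id τ).const_mul (b' t - a' t)).add_const (a' t)
  refine (hv.mul (hw.hasFDerivAt.comp_hasDerivAt_vertical (γ := fun σ => (b t - a t) * σ + a t)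
    hc)).sub (hf.hasFDerivAt.comp_hasDerivAt_vertical (γ := fun σ => (b t - a t) * σ + a t) hc)
    |>.congr_deriv ?_
  rw [ContinuousLinearMap.apply_pair (fderiv ℝ w _) 1, ContinuousLinearMap.apply_pair (fderiv ℝ w _) 0,
    ContinuousLinearMap.apply_pair (fderiv ℝ f _) 0]
  linear_combination (a t - b t) * hcons

theorem hasDerivAt_intervalIntegral_of_conservation_law (hU : IsOpen U)
    (hw : ContDiffOn ℝ 1 w (U ×ˢ univ)) (hf : DifferentiableOn ℝ f (U ×ˢ univ))
    (hcons : ∀ q ∈ U ×ˢ univ, fderiv ℝ w q (1, 0) + fderiv ℝ f q (0, 1) = 0)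
    (ha : ∀ t ∈ U, HasDerivAt a (a' t) t) (hb : ∀ t ∈ U, HasDerivAt b (b' t) t)
    (ha' : ContinuousOn a' U) (hb' : ContinuousOn b' U) {t : ℝ} (ht : t ∈ U) :
    HasDerivAt (fun s => ∫ x in a s..b s, w (s, x))
      (b' t * w (t, b t) - f (t, b t) - (a' t * w (t, a t) - f (t, a t))) t := by
  have hS : IsOpen (U ×ˢ (univ : Set ℝ)) := hU.prod isOpen_univ
  have hwd {s : ℝ} (hs : s ∈ U) (x : ℝ) : DifferentiableAt ℝ w (s, x) :=
    (hw.differentiableOn one_ne_zero).differentiableAt (hS.mem_nhds ⟨hs, trivial⟩)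
  have hfd (x : ℝ) : DifferentiableAt ℝ f (t, x) := hf.differentiableAt (hS.mem_nhds ⟨ht, trivial⟩)
  have hG := continuousOn_deriv_rescaledIntegrand hU hw
    (fun s hs => (ha s hs).continuousAt.continuousWithinAt)
    (fun s hs => (hb s hs).continuousAt.continuousWithinAt) ha' hb'
  simp only [intervalIntegral.integral_eq_integral_zero_one (fun x => w (_, x))]
  refine (hasDerivAt_intervalIntegral_of_continuousOn_s7 hU (fun s hs => ?_)
    (hG.mono (prod_mono subset_rfl (subset_univ _)))
    (fun s hs τ _ => hasDerivAt_rescaledIntegrand (ha s hs) (hb s hs) (hwd hs _)) ht).congr_deriv ?_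
  · exact (continuous_const.mul (hw.continuousOn.comp_continuous (continuous_const.prodMk
      ((continuous_const.mul continuous_id).add continuous_const))
        fun τ => ⟨hs, trivial⟩)).continuousOn
  · rw [intervalIntegral.integral_eq_sub_of_hasDerivAt
      (fun τ _ => hasDerivAt_flux_along_segment (hwd ht _) (hfd _) (hcons _ ⟨ht, trivial⟩))
      ((hG.comp_continuous (continuous_const.prodMk continuous_id)
        fun τ => ⟨ht, trivial⟩).intervalIntegrable _ _)]
    simp

end ConservationLaw

theorem conservation_law_of_diagonal_system {lm lp : ℝ × ℝ → ℝ} {q : ℝ × ℝ}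
    (hm : DifferentiableAt ℝ lm q) (hp : DifferentiableAt ℝ lp q) (hne : lp q - lm q ≠ 0)
    (eqm : fderiv ℝ lm q (1, 0) + lp q * fderiv ℝ lm q (0, 1) = 0)
    (eqp : fderiv ℝ lp q (1, 0) + lm q * fderiv ℝ lp q (0, 1) = 0) :
    fderiv ℝ (fun q => (lp q - lm q)⁻¹) q (1, 0)
      + fderiv ℝ (fun q => lm q * (lp q - lm q)⁻¹) q (0, 1) = 0 := by
  have hw : HasFDerivAt (fun q => (lp q - lm q)⁻¹)
      (-((lp q - lm q) ^ 2)⁻¹ • (fderiv ℝ lp q - fderiv ℝ lm q)) q :=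
    (hasDerivAt_inv hne).comp_hasFDerivAt q (hp.hasFDerivAt.sub hm.hasFDerivAt)
  rw [(hm.hasFDerivAt.fun_mul hw).fderiv, hw.fderiv]
  simp only [smul_apply, sub_apply, smul_eq_mul, neg_mul, add_apply, mul_neg]
  field_simp
  linear_combination eqm - eqp

section Strip

variable {T : ℝ} {l c : ℝ × ℝ → ℝ}

theorem ContDiffOn.hasFDerivAt_of_mem_Ioo (hl : ContDiffOn ℝ 1 l (Ico 0 T ×ˢ univ)) {t : ℝ}
    (ht : t ∈ Ioo 0 T) (x : ℝ) : HasFDerivAt l (fderiv ℝ l (t, x)) (t, x) :=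
  (hl.differentiableOn one_ne_zero |>.differentiableAt
    (prod_mem_nhds (Ico_mem_nhds ht.1 ht.2) univ_mem)).hasFDerivAt

theorem fderiv_transport_eq_zero (hl : ContDiffOn ℝ 1 l (Ico 0 T ×ˢ univ))
    (h : ∀ t ∈ Ico 0 T, ∀ x : ℝ,
      derivWithin (fun s => l (s, x)) (Ico 0 T) t + c (t, x) * deriv (fun y => l (t, y)) x = 0)
    {t : ℝ} (ht : t ∈ Ioo 0 T) (x : ℝ) :
    fderiv ℝ l (t, x) (1, 0) + c (t, x) * fderiv ℝ l (t, x) (0, 1) = 0 := by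
  have h := h t (Ioo_subset_Ico_self ht) x
  rwa [(hl.hasFDerivAt_of_mem_Ioo ht x).derivWithin_slice_fst (Ico_mem_nhds ht.1 ht.2),
    (hl.hasFDerivAt_of_mem_Ioo ht x).deriv_slice_snd] at h

end Strip

theorem lt_on_Icc_of_ne_on_Ioc {f g : ℝ → ℝ} {a b : ℝ} (hf : ContinuousOn f (Icc a b))
    (hg : ContinuousOn g (Icc a b)) (ha : f a < g a) (hne : ∀ t ∈ Ioc a b, f t ≠ g t) :
    ∀ t ∈ Icc a b, f t < g t := by
  intro t ht
  by_contra! hle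
  obtain ⟨s, hs, hfg⟩ := intermediate_value_Icc' ht.1
    ((hg.sub hf).mono (Icc_subset_Icc_right ht.2)) (⟨by linarith, by linarith⟩ :
      (0 : ℝ) ∈ Icc (g t - f t) (g a - f a))
  rw [Pi.sub_apply, sub_eq_zero] at hfg
  rcases hs.1.eq_or_lt with rfl | hlt
  · exact ha.ne' hfg
  · exact hne s ⟨hlt, hs.2.trans ht.2⟩ hfg.symm

theorem hasDerivAt_mass_between_characteristics {T : ℝ} {lm lp : ℝ × ℝ → ℝ}
    (hlm : ContDiffOn ℝ 1 lm (Ico 0 T ×ˢ (univ : Set ℝ)))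
    (hlp : ContDiffOn ℝ 1 lp (Ico 0 T ×ˢ (univ : Set ℝ)))
    (hordl : ∀ t ∈ Ico (0:ℝ) T, ∀ x : ℝ, lm (t, x) < lp (t, x))
    (sys1 : ∀ t ∈ Ico (0:ℝ) T, ∀ x : ℝ,
      derivWithin (fun s => lm (s, x)) (Ico 0 T) t + lp (t, x) * deriv (fun y => lm (t, y)) x = 0)
    (sys2 : ∀ t ∈ Ico (0:ℝ) T, ∀ x : ℝ,
      derivWithin (fun s => lp (s, x)) (Ico 0 T) t + lm (t, x) * deriv (fun y => lp (t, y)) x = 0)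
    {xm xp : ℝ → ℝ}
    (hxm : ∀ t ∈ Ico (0:ℝ) T, HasDerivWithinAt xm (lp (t, xm t)) (Ico 0 T) t)
    (hxp : ∀ t ∈ Ico (0:ℝ) T, HasDerivWithinAt xp (lm (t, xp t)) (Ico 0 T) t)
    {t : ℝ} (ht : t ∈ Ioo 0 T) :
    HasDerivAt (fun s => ∫ x in xm s..xp s, (lp (s, x) - lm (s, x))⁻¹) (-1) t := by
  have hsub : Ioo 0 T ×ˢ (univ : Set ℝ) ⊆ Ico 0 T ×ˢ univ :=
    prod_mono Ioo_subset_Ico_self subset_rfl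
  have hne : ∀ q ∈ Ico 0 T ×ˢ (univ : Set ℝ), lp q - lm q ≠ 0 := fun q hq =>
    (sub_pos.2 (hordl q.1 hq.1 q.2)).ne'
  have hcons : ∀ q ∈ Ioo 0 T ×ˢ (univ : Set ℝ), fderiv ℝ (fun q => (lp q - lm q)⁻¹) q (1, 0)
      + fderiv ℝ (fun q => lm q * (lp q - lm q)⁻¹) q (0, 1) = 0 := by
    rintro ⟨s, x⟩ ⟨hs, -⟩
    exact conservation_law_of_diagonal_system (hlm.hasFDerivAt_of_mem_Ioo hs x).differentiableAt
      (hlp.hasFDerivAt_of_mem_Ioo hs x).differentiableAt (hne _ ⟨Ioo_subset_Ico_self hs, trivial⟩)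
      (fderiv_transport_eq_zero hlm sys1 hs x) (fderiv_transport_eq_zero hlp sys2 hs x)
  have hchar {x : ℝ → ℝ} {l : ℝ × ℝ → ℝ}
      (hx : ∀ t ∈ Ico (0:ℝ) T, HasDerivWithinAt x (l (t, x t)) (Ico 0 T) t) :
      ∀ s ∈ Ioo 0 T, HasDerivAt x (l (s, x s)) s := fun s hs =>
    (hx s (Ioo_subset_Ico_self hs)).hasDerivAt (Ico_mem_nhds hs.1 hs.2)
  have hspeed {x : ℝ → ℝ} {l : ℝ × ℝ → ℝ} (hl : ContDiffOn ℝ 1 l (Ico 0 T ×ˢ univ))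
      (hx : ∀ t ∈ Ico (0:ℝ) T, HasDerivWithinAt x (l (t, x t)) (Ico 0 T) t) :
      ContinuousOn (fun s => l (s, x s)) (Ioo 0 T) :=
    hl.continuousOn.comp
      (continuousOn_id.prodMk fun s hs => (hchar hx s hs).continuousAt.continuousWithinAt)
      fun s hs => hsub ⟨hs, trivial⟩
  refine (hasDerivAt_intervalIntegral_of_conservation_law isOpen_Ioo
    (((hlp.sub hlm).inv hne).mono hsub)
    ((hlm.mul ((hlp.sub hlm).inv hne)).differentiableOn one_ne_zero |>.mono hsub)
    hcons (hchar hxm) (hchar hxp) (hspeed hlp hxm) (hspeed hlm hxp) ht).congr_deriv ?_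
  have hne_xm := hne (t, xm t) ⟨Ioo_subset_Ico_self ht, trivial⟩
  simp only [Pi.inv_apply]
  field_simp
  ring

theorem characteristics_of_different_families_intersect_general
    (T : ℝ) (hT : 0 < T)
    (Lm Lp : ℝ → ℝ)
    (α₀ β₀ : ℝ) (hαβ : α₀ < β₀)
    (t₀ : ℝ) (ht₀ : t₀ = ∫ ζ in α₀..β₀, 1 / (Lp ζ - Lm ζ))
    (lm lp : ℝ × ℝ → ℝ)
    (hlm : ContDiffOn ℝ 1 lm (Ico 0 T ×ˢ (univ : Set ℝ)))
    (hlp : ContDiffOn ℝ 1 lp (Ico 0 T ×ˢ (univ : Set ℝ)))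
    (hinit : ∀ x : ℝ, lm (0, x) = Lm x ∧ lp (0, x) = Lp x)
    (hordl : ∀ t ∈ Ico (0:ℝ) T, ∀ x : ℝ, lm (t, x) < lp (t, x))
    (sys1 : ∀ t ∈ Ico (0:ℝ) T, ∀ x : ℝ,
      derivWithin (fun s => lm (s, x)) (Ico 0 T) t
        + lp (t, x) * deriv (fun y => lm (t, y)) x = 0)
    (sys2 : ∀ t ∈ Ico (0:ℝ) T, ∀ x : ℝ,
      derivWithin (fun s => lp (s, x)) (Ico 0 T) t
        + lm (t, x) * deriv (fun y => lp (t, y)) x = 0)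
    (xm xp : ℝ → ℝ)
    (hxm0 : xm 0 = α₀) (hxp0 : xp 0 = β₀)
    (hxm : ∀ t ∈ Ico (0:ℝ) T, HasDerivWithinAt xm (lp (t, xm t)) (Ico 0 T) t)
    (hxp : ∀ t ∈ Ico (0:ℝ) T, HasDerivWithinAt xp (lm (t, xp t)) (Ico 0 T) t)
    (hTt₀ : t₀ < T) :
    ∃ tstar : ℝ, 0 < tstar ∧ tstar ≤ t₀ ∧ xm tstar = xp tstar := by
  set φ : ℝ → ℝ := fun t => ∫ x in xm t..xp t, (lp (t, x) - lm (t, x))⁻¹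
  have hw : ContinuousOn (fun q => (lp q - lm q)⁻¹) (Ico 0 T ×ˢ (univ : Set ℝ)) :=
    (hlp.continuousOn.sub hlm.continuousOn).inv₀ fun q hq => (sub_pos.2 (hordl q.1 hq.1 q.2)).ne'
  have hxmc : ContinuousOn xm (Ico 0 T) := fun t ht => (hxm t ht).continuousWithinAt
  have hxpc : ContinuousOn xp (Ico 0 T) := fun t ht => (hxp t ht).continuousWithinAt
  have hφ_pos : ∀ t ∈ Ico 0 T, xm t < xp t → 0 < φ t := fun t ht hlt =>
    intervalIntegral.intervalIntegral_pos_of_pos ((hw.comp_continuous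
      (continuous_const.prodMk continuous_id) fun x => ⟨ht, trivial⟩).intervalIntegrable _ _)
      (fun x => inv_pos.2 (sub_pos.2 (hordl t ht x))) hlt
  have hφ0 : φ 0 = t₀ := by simp only [φ, hxm0, hxp0, hinit, ht₀, one_div]
  have ht₀_pos : 0 < t₀ := hφ0 ▸ hφ_pos 0 ⟨le_rfl, hT⟩ (hxm0 ▸ hxp0 ▸ hαβ)
  have hIcc : Icc 0 t₀ ⊆ Ico 0 T := Icc_subset_Ico_right hTt₀
  by_contra! hmeet
  have hsep := lt_on_Icc_of_ne_on_Ioc (hxmc.mono hIcc) (hxpc.mono hIcc) (hxm0 ▸ hxp0 ▸ hαβ)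
    fun t ht => hmeet t ht.1 ht.2
  obtain ⟨c, -, hslope⟩ := exists_hasDerivAt_eq_slope φ (fun _ => -1) ht₀_pos
    ((continuousOn_intervalIntegral_between hw hxmc hxpc).mono hIcc) fun t ht =>
      hasDerivAt_mass_between_characteristics hlm hlp hordl sys1 sys2 hxm hxp
        ⟨ht.1, ht.2.trans hTt₀⟩
  rw [hφ0, sub_zero, eq_div_iff ht₀_pos.ne'] at hslope
  linarith [hφ_pos t₀ (hIcc ⟨ht₀_pos.le, le_rfl⟩) (hsep t₀ ⟨ht₀_pos.le, le_rfl⟩)]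

/-- Lemma 2.5: the characteristics of different families starting from `α₀` and `β₀`
with `Λ₋(α₀) = Λ₊(β₀)` intersect in finite time (no later than `t₀`). -/
theorem characteristics_of_different_families_intersect
    (T : ℝ) (hT : 0 < T)
    (Lm Lp : ℝ → ℝ) (hLm : ContDiff ℝ 1 Lm) (hLp : ContDiff ℝ 1 Lp)
    (hord : ∀ x, Lm x < Lp x)
    (hLm' : ∀ x, deriv Lm x < 0) (hLp' : ∀ x, deriv Lp x < 0)
    (α₀ β₀ : ℝ) (hαβ : α₀ < β₀) (heq : Lm α₀ = Lp β₀)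
    (t₀ : ℝ) (ht₀ : t₀ = ∫ ζ in α₀..β₀, 1 / (Lp ζ - Lm ζ))
    (lm lp : ℝ × ℝ → ℝ)
    (hlm : ContDiffOn ℝ 1 lm (Ico 0 T ×ˢ (univ : Set ℝ)))
    (hlp : ContDiffOn ℝ 1 lp (Ico 0 T ×ˢ (univ : Set ℝ)))
    (hinit : ∀ x : ℝ, lm (0, x) = Lm x ∧ lp (0, x) = Lp x)
    (hordl : ∀ t ∈ Ico (0:ℝ) T, ∀ x : ℝ, lm (t, x) < lp (t, x))
    (sys1 : ∀ t ∈ Ico (0:ℝ) T, ∀ x : ℝ,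
      derivWithin (fun s => lm (s, x)) (Ico 0 T) t
        + lp (t, x) * deriv (fun y => lm (t, y)) x = 0)
    (sys2 : ∀ t ∈ Ico (0:ℝ) T, ∀ x : ℝ,
      derivWithin (fun s => lp (s, x)) (Ico 0 T) t
        + lm (t, x) * deriv (fun y => lp (t, y)) x = 0)
    (xm xp : ℝ → ℝ)
    (hxm0 : xm 0 = α₀) (hxp0 : xp 0 = β₀)
    (hxm : ∀ t ∈ Ico (0:ℝ) T, HasDerivWithinAt xm (lp (t, xm t)) (Ico 0 T) t)
    (hxp : ∀ t ∈ Ico (0:ℝ) T, HasDerivWithinAt xp (lm (t, xp t)) (Ico 0 T) t)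
    (hTt₀ : t₀ < T) :
    ∃ tstar : ℝ, 0 < tstar ∧ tstar ≤ t₀ ∧ xm tstar = xp tstar :=
  characteristics_of_different_families_intersect_general T hT Lm Lp α₀ β₀ hαβ t₀ ht₀ lm lp hlm hlp
    hinit hordl sys1 sys2 xm xp hxm0 hxp0 hxm hxp hTt₀
end

section
/- Let Λ₋, Λ₊ : ℝ → ℝ be C¹ with Λ₋(x) < Λ₊(x) for all x. Define t(α,β) = ∫_α^β dζ/(Λ₊(ζ) − Λ₋(ζ)), x(α,β) = ½[α + β + ∫_α^β (Λ₊(ζ) + Λ₋(ζ))/(Λ₊(ζ) − Λ₋(ζ)) dζ] and Π(α,β) = (t(α,β), x(α,β)). Then Π is C¹ on ℝ² and its Jacobian determinant satisfies J(α,β) := t_α x_β − t_β x_α = (Λ₋(α) − Λ₊(β)) / ((Λ₊(α) − Λ₋(α))(Λ₊(β) − Λ₋(β))). In particular, (α,β) is a singular point of Π (i.e., J(α,β) = 0) if and only if Λ₋(α) = Λ₊(β). -/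
open Set

/-- The time coordinate `t(α,β)` of the map `Π` (formula (2.8)). -/
noncomputable def tmap (Lm Lp : ℝ → ℝ) (α β : ℝ) : ℝ :=
  ∫ ζ in α..β, 1 / (Lp ζ - Lm ζ)

/-- The space coordinate `x(α,β)` of the map `Π` (formula (2.9)). -/
noncomputable def xmap (Lm Lp : ℝ → ℝ) (α β : ℝ) : ℝ :=
  (α + β + ∫ ζ in α..β, (Lp ζ + Lm ζ) / (Lp ζ - Lm ζ)) / 2

/-!
Both coordinates of `Π` are, up to affine terms, integrals of continuous densities from `α`
to `β`, so by the fundamental theorem of calculus `Π` is `C¹` and, writing `Δ = Λ₊ − Λ₋`,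
`t_α = −1/Δ(α)`, `t_β = 1/Δ(β)`, `x_α = −Λ₋(α)/Δ(α)`, `x_β = Λ₊(β)/Δ(β)`.
Hence `J(α,β) = (Λ₋(α) − Λ₊(β)) / (Δ(α) Δ(β))`, whose denominator never vanishes.
-/

section IntervalIntegral

variable {g : ℝ → ℝ}

theorem contDiff_integral_of_continuous (hg : Continuous g) :
    ContDiff ℝ 1 (fun x => ∫ ζ in (0 : ℝ)..x, g ζ) := by
  have hderiv : deriv (fun x => ∫ ζ in (0 : ℝ)..x, g ζ) = g :=
    funext (hg.deriv_integral g 0)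
  rw [contDiff_one_iff_deriv, hderiv]
  exact ⟨fun x => (hg.integral_hasStrictDerivAt 0 x).hasDerivAt.differentiableAt, hg⟩

theorem contDiff_integral_prod_of_continuous (hg : Continuous g) :
    ContDiff ℝ 1 (fun q : ℝ × ℝ => ∫ ζ in q.1..q.2, g ζ) := by
  have hsplit : (fun q : ℝ × ℝ => ∫ ζ in q.1..q.2, g ζ) =
      fun q => (∫ ζ in (0 : ℝ)..q.2, g ζ) - ∫ ζ in (0 : ℝ)..q.1, g ζ :=
    funext fun q => (intervalIntegral.integral_interval_sub_left
      (hg.intervalIntegrable _ _) (hg.intervalIntegrable _ _)).symm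
  have hF := contDiff_integral_of_continuous hg
  rw [hsplit]
  exact (hF.comp contDiff_snd).sub (hF.comp contDiff_fst)

theorem hasDerivAt_integral_left_of_continuous (hg : Continuous g) (a b : ℝ) :
    HasDerivAt (fun u => ∫ ζ in u..b, g ζ) (-g a) a :=
  intervalIntegral.integral_hasDerivAt_left (hg.intervalIntegrable _ _)
    (hg.stronglyMeasurableAtFilter _ _) hg.continuousAt

end IntervalIntegral

section CharacteristicMap

variable {Lm Lp : ℝ → ℝ}

theorem continuous_one_div_sub (hm : Continuous Lm) (hp : Continuous Lp)
    (hne : ∀ x, Lp x ≠ Lm x) : Continuous fun ζ => 1 / (Lp ζ - Lm ζ) :=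
  continuous_const.div (hp.sub hm) fun x => sub_ne_zero.2 (hne x)

theorem continuous_add_div_sub (hm : Continuous Lm) (hp : Continuous Lp)
    (hne : ∀ x, Lp x ≠ Lm x) : Continuous fun ζ => (Lp ζ + Lm ζ) / (Lp ζ - Lm ζ) :=
  (hp.add hm).div (hp.sub hm) fun x => sub_ne_zero.2 (hne x)

theorem contDiff_tmap_xmap (hm : Continuous Lm) (hp : Continuous Lp) (hne : ∀ x, Lp x ≠ Lm x) :
    ContDiff ℝ 1 (fun q : ℝ × ℝ => (tmap Lm Lp q.1 q.2, xmap Lm Lp q.1 q.2)) := by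
  have ht := contDiff_integral_prod_of_continuous (continuous_one_div_sub hm hp hne)
  have hx := contDiff_integral_prod_of_continuous (continuous_add_div_sub hm hp hne)
  exact ht.prodMk (((contDiff_fst.add contDiff_snd).add hx).div_const 2)

theorem hasDerivAt_tmap_left (hm : Continuous Lm) (hp : Continuous Lp)
    (hne : ∀ x, Lp x ≠ Lm x) (α β : ℝ) :
    HasDerivAt (fun a => tmap Lm Lp a β) (-(1 / (Lp α - Lm α))) α :=
  hasDerivAt_integral_left_of_continuous (continuous_one_div_sub hm hp hne) α β

theorem hasDerivAt_tmap_right (hm : Continuous Lm) (hp : Continuous Lp)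
    (hne : ∀ x, Lp x ≠ Lm x) (α β : ℝ) :
    HasDerivAt (fun b => tmap Lm Lp α b) (1 / (Lp β - Lm β)) β :=
  ((continuous_one_div_sub hm hp hne).integral_hasStrictDerivAt α β).hasDerivAt

theorem hasDerivAt_xmap_left (hm : Continuous Lm) (hp : Continuous Lp)
    (hne : ∀ x, Lp x ≠ Lm x) (α β : ℝ) :
    HasDerivAt (fun a => xmap Lm Lp a β) (-Lm α / (Lp α - Lm α)) α := by
  have hI := hasDerivAt_integral_left_of_continuous (continuous_add_div_sub hm hp hne) α β
  refine ((((hasDerivAt_id α).add_const β).add hI).div_const 2).congr_deriv ?_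
  field_simp [sub_ne_zero.2 (hne α)]
  ring

theorem hasDerivAt_xmap_right (hm : Continuous Lm) (hp : Continuous Lp)
    (hne : ∀ x, Lp x ≠ Lm x) (α β : ℝ) :
    HasDerivAt (fun b => xmap Lm Lp α b) (Lp β / (Lp β - Lm β)) β := by
  have hI := ((continuous_add_div_sub hm hp hne).integral_hasStrictDerivAt α β).hasDerivAt
  refine ((((hasDerivAt_id β).const_add α).add hI).div_const 2).congr_deriv ?_
  field_simp [sub_ne_zero.2 (hne β)]
  ring

end CharacteristicMap

/-- The map `Π(α,β) = (t(α,β), x(α,β))` is `C¹`, its Jacobian is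
`J(α,β) = (Λ₋(α) − Λ₊(β)) / ((Λ₊(α) − Λ₋(α))(Λ₊(β) − Λ₋(β)))`, and `(α,β)` is a
singular point of `Π` (i.e. `J(α,β) = 0`) if and only if `Λ₋(α) = Λ₊(β)`. -/
theorem jacobian_of_characteristic_map
    (Lm Lp : ℝ → ℝ) (hLm : ContDiff ℝ 1 Lm) (hLp : ContDiff ℝ 1 Lp)
    (hord : ∀ x, Lm x < Lp x) :
    ContDiff ℝ 1 (fun q : ℝ × ℝ => (tmap Lm Lp q.1 q.2, xmap Lm Lp q.1 q.2)) ∧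
    ∀ α β : ℝ,
      (deriv (fun a => tmap Lm Lp a β) α * deriv (fun b => xmap Lm Lp α b) β
          - deriv (fun b => tmap Lm Lp α b) β * deriv (fun a => xmap Lm Lp a β) α
        = (Lm α - Lp β) / ((Lp α - Lm α) * (Lp β - Lm β))) ∧
      ((deriv (fun a => tmap Lm Lp a β) α * deriv (fun b => xmap Lm Lp α b) β
          - deriv (fun b => tmap Lm Lp α b) β * deriv (fun a => xmap Lm Lp a β) α = 0)
        ↔ Lm α = Lp β) := by
  have hm := hLm.continuous
  have hp := hLp.continuous
  have hne : ∀ x, Lp x ≠ Lm x := fun x => (hord x).ne'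
  have hΔ : ∀ x, Lp x - Lm x ≠ 0 := fun x => sub_ne_zero.2 (hne x)
  refine ⟨contDiff_tmap_xmap hm hp hne, fun α β => ?_⟩
  have hJ : deriv (fun a => tmap Lm Lp a β) α * deriv (fun b => xmap Lm Lp α b) β
      - deriv (fun b => tmap Lm Lp α b) β * deriv (fun a => xmap Lm Lp a β) α
      = (Lm α - Lp β) / ((Lp α - Lm α) * (Lp β - Lm β)) := by
    rw [(hasDerivAt_tmap_left hm hp hne α β).deriv, (hasDerivAt_xmap_right hm hp hne α β).deriv,
      (hasDerivAt_tmap_right hm hp hne α β).deriv, (hasDerivAt_xmap_left hm hp hne α β).deriv]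
    field_simp [hΔ α, hΔ β]
    ring
  refine ⟨hJ, ?_⟩
  rw [hJ, div_eq_zero_iff, sub_eq_zero]
  exact or_iff_left (mul_ne_zero (hΔ α) (hΔ β))
end

section
/- Let Λ₋, Λ₊ : ℝ → ℝ be C² functions and α₀ < β₀ satisfy assumptions (H1)–(H5), and let Π(α,β) = (t(α,β), x(α,β)) be the map defined by t(α,β) = ∫_α^β dζ/(Λ₊(ζ) − Λ₋(ζ)) and x(α,β) = ½[α + β + ∫_α^β (Λ₊(ζ) + Λ₋(ζ))/(Λ₊(ζ) − Λ₋(ζ)) dζ]. Let β(α) := Λ₊⁻¹(Λ₋(α)) and Υ(α) := (α, β(α)). Then: (A) β is strictly increasing; (B) (d/dα)(Π∘Υ)(α₀) = (0,0) while (d²/dα²)(Π∘Υ)(α₀) ≠ (0,0) (so (α₀,β₀) is a cusp point of Π), and there exists ε > 0 such that for every α ∈ (α₀ − ε, α₀ + ε) with α ≠ α₀ one has (d/dα)(Π∘Υ)(α) ≠ (0,0) (so those singular points are fold points of Π). -/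
/-!
Implicit differentiation of `Λ₊(β(α)) = Λ₋(α)` gives `β' = Λ₋'(α) / Λ₊'(β)`, and differentiating
the integrals along `Υ` collapses, using `Λ₊(β) = Λ₋(α)`, to
`(Π ∘ Υ)'(α) = (f(α) / Λ₊'(β(α))) • (1, Λ₋(α))`.
So `(Π ∘ Υ)'` vanishes exactly at the zeros of `f`. At `α₀` its derivative is
`(f'(α₀) / Λ₊'(β(α₀))) • (1, Λ₋(α₀)) ≠ 0`, since `f(α₀) = 0` kills the other term of the product
rule, and `f'(α₀) ≠ 0` makes `α₀` an isolated zero of `f`. Monotonicity of `β` holds because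
`Λ₋` and `Λ₊` are both decreasing.
-/

open Set

open Filter Topology

theorem StrictAnti.strictMono_of_comp_eq {α β γ : Type*} [Preorder α] [LinearOrder β]
    [Preorder γ] {g : β → γ} {h : α → γ} {φ : α → β} (hg : StrictAnti g) (hh : StrictAnti h)
    (hcomp : ∀ x, g (φ x) = h x) : StrictMono φ := fun x y hxy =>
  hg.lt_iff_gt.mp (by rw [hcomp, hcomp]; exact hh hxy)

theorem HasStrictDerivAt.hasDerivAt_of_comp_eq {𝕜 : Type*} [NontriviallyNormedField 𝕜]
    [CompleteSpace 𝕜] {g h φ : 𝕜 → 𝕜} {g' h' a : 𝕜} (hg : HasStrictDerivAt g g' (φ a))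
    (hg' : g' ≠ 0) (hinj : Function.Injective g) (hh : HasDerivAt h h' a)
    (hcomp : ∀ x, g (φ x) = h x) : HasDerivAt φ (h' / g') a := by
  set ψ := hg.localInverse g g' (φ a) hg'
  have hψ : HasDerivAt ψ g'⁻¹ (h a) := hcomp a ▸ (hg.to_localInverse hg').hasDerivAt
  have hright : ∀ᶠ y in 𝓝 (h a), g (ψ y) = y := hcomp a ▸ hg.eventually_right_inverse hg'
  have hφ : (fun x => ψ (h x)) =ᶠ[𝓝 a] φ :=
    (hh.continuousAt.eventually hright).mono fun x hx => hinj (by rw [hx, hcomp])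
  rw [div_eq_inv_mul]
  exact (hψ.comp a hh).congr_of_eventuallyEq hφ.symm

theorem Continuous.hasDerivAt_intervalIntegral_from_self {G : ℝ → ℝ} (hG : Continuous G)
    {φ : ℝ → ℝ} {φ' a : ℝ} (hφ : HasDerivAt φ φ' a) :
    HasDerivAt (fun x => ∫ ζ in x..φ x, G ζ) (G (φ a) * φ' - G a) a := by
  have hF (x : ℝ) : HasDerivAt (fun u => ∫ ζ in (0 : ℝ)..u, G ζ) (G x) x :=
    (hG.integral_hasStrictDerivAt 0 x).hasDerivAt
  have hsub : (fun x => ∫ ζ in x..φ x, G ζ) =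
      fun x => (∫ ζ in (0 : ℝ)..φ x, G ζ) - ∫ ζ in (0 : ℝ)..x, G ζ := funext fun x =>
    (intervalIntegral.integral_interval_sub_left (hG.intervalIntegrable _ _)
      (hG.intervalIntegrable _ _)).symm
  rw [hsub]
  exact ((hF (φ a)).comp a hφ).sub (hF a)

theorem HasDerivAt.div_of_eq_zero {f p : ℝ → ℝ} {f' a : ℝ} (hf : HasDerivAt f f' a)
    (hf0 : f a = 0) (hp : DifferentiableAt ℝ p a) (hpa : p a ≠ 0) :
    HasDerivAt (fun x => f x / p x) (f' / p a) a := by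
  have h := hf.div hp.hasDerivAt hpa
  rwa [hf0, zero_mul, sub_zero, sq, ← div_div, mul_div_cancel_right₀ _ hpa] at h

/-- The function `f` of (H4)–(H5). -/
noncomputable def cuspFunction (Lm Lp bf : ℝ → ℝ) (a : ℝ) : ℝ :=
  deriv Lm a / (Lp (bf a) - Lm (bf a)) - deriv Lp (bf a) / (Lp a - Lm a)

section SingularCurve

variable {Lm Lp bf : ℝ → ℝ}

theorem hasDerivAt_singularCurve (hLm : Differentiable ℝ Lm) (hLp : ContDiff ℝ 1 Lp)
    (hLp' : ∀ x, deriv Lp x < 0) (hbf : ∀ a, Lp (bf a) = Lm a) (a : ℝ) :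
    HasDerivAt bf (deriv Lm a / deriv Lp (bf a)) a :=
  (hLp.contDiffAt.hasStrictDerivAt one_ne_zero).hasDerivAt_of_comp_eq (hLp' _).ne
    (strictAnti_of_deriv_neg hLp').injective (hLm a).hasDerivAt hbf

variable (hLmc : Continuous Lm) (hLpc : Continuous Lp) (hord : ∀ x, Lm x < Lp x) {a : ℝ}
  (hbf' : HasDerivAt bf (deriv Lm a / deriv Lp (bf a)) a) (hp : deriv Lp (bf a) ≠ 0)
include hLmc hLpc hord hbf' hp

theorem hasDerivAt_tmap_singularCurve :
    HasDerivAt (fun a => tmap Lm Lp a (bf a)) (cuspFunction Lm Lp bf a / deriv Lp (bf a)) a := by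
  have hne (x : ℝ) : Lp x - Lm x ≠ 0 := sub_ne_zero.mpr (hord x).ne'
  refine (Continuous.hasDerivAt_intervalIntegral_from_self (G := fun ζ => 1 / (Lp ζ - Lm ζ))
    (continuous_const.div (hLpc.sub hLmc) hne) hbf').congr_deriv ?_
  have hα := hne a
  have hβ := hne (bf a)
  rw [cuspFunction]
  field_simp

theorem hasDerivAt_xmap_singularCurve (hbf : Lp (bf a) = Lm a) :
    HasDerivAt (fun a => xmap Lm Lp a (bf a))
      (cuspFunction Lm Lp bf a / deriv Lp (bf a) * Lm a) a := by
  have hne (x : ℝ) : Lp x - Lm x ≠ 0 := sub_ne_zero.mpr (hord x).ne'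
  have hint := Continuous.hasDerivAt_intervalIntegral_from_self
    (G := fun ζ => (Lp ζ + Lm ζ) / (Lp ζ - Lm ζ)) ((hLpc.add hLmc).div (hLpc.sub hLmc) hne) hbf'
  refine ((((hasDerivAt_id' a).add hbf').add hint).div_const 2).congr_deriv ?_
  have hα := hne a
  have hβ : Lm a - Lm (bf a) ≠ 0 := hbf ▸ hne (bf a)
  rw [cuspFunction, hbf]
  field_simp
  ring

theorem hasDerivAt_tmap_xmap_singularCurve (hbf : Lp (bf a) = Lm a) :
    HasDerivAt (fun a => (tmap Lm Lp a (bf a), xmap Lm Lp a (bf a)))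
      ((cuspFunction Lm Lp bf a / deriv Lp (bf a)) • ((1 : ℝ), Lm a)) a := by
  rw [Prod.smul_mk, smul_eq_mul, smul_eq_mul, mul_one]
  exact (hasDerivAt_tmap_singularCurve hLmc hLpc hord hbf' hp).prodMk
    (hasDerivAt_xmap_singularCurve hLmc hLpc hord hbf' hp hbf)

end SingularCurve

theorem singular_points_fold_and_cusp_general
    (Lm Lp : ℝ → ℝ) (hLm : ContDiff ℝ 2 Lm) (hLp : ContDiff ℝ 2 Lp)
    (α₀ : ℝ)
    -- (H1)
    (hord : ∀ x, Lm x < Lp x)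
    -- (H2)
    (hLm' : ∀ x, deriv Lm x < 0) (hLp' : ∀ x, deriv Lp x < 0)
    (bf : ℝ → ℝ) (hbf : ∀ a : ℝ, Lp (bf a) = Lm a)
    (f : ℝ → ℝ)
    (hf : ∀ a, f a = deriv Lm a / (Lp (bf a) - Lm (bf a))
        - deriv Lp (bf a) / (Lp a - Lm a))
    -- (H4)
    (hf0 : f α₀ = 0)
    -- (H5)
    (hfdiff : DifferentiableAt ℝ f α₀) (hf' : deriv f α₀ < 0) :
    StrictMono bf ∧
    deriv (fun a => (tmap Lm Lp a (bf a), xmap Lm Lp a (bf a))) α₀ = 0 ∧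
    deriv (deriv (fun a => (tmap Lm Lp a (bf a), xmap Lm Lp a (bf a)))) α₀ ≠ 0 ∧
    ∃ ε > 0, ∀ a ∈ Ioo (α₀ - ε) (α₀ + ε), a ≠ α₀ →
      deriv (fun a => (tmap Lm Lp a (bf a), xmap Lm Lp a (bf a))) a ≠ 0 := by
  obtain rfl : f = cuspFunction Lm Lp bf := funext hf
  have hLmd : Differentiable ℝ Lm := hLm.differentiable two_ne_zero
  have hbf' := hasDerivAt_singularCurve hLmd (hLp.of_le one_le_two) hLp' hbf
  have hp (a : ℝ) : deriv Lp (bf a) ≠ 0 := (hLp' _).ne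
  have hderiv : deriv (fun a => (tmap Lm Lp a (bf a), xmap Lm Lp a (bf a))) =
      fun a => (cuspFunction Lm Lp bf a / deriv Lp (bf a)) • ((1 : ℝ), Lm a) := funext fun a =>
    (hasDerivAt_tmap_xmap_singularCurve hLmd.continuous hLp.continuous hord (hbf' a) (hp a)
      (hbf a)).deriv
  have hpd : DifferentiableAt ℝ (fun a => deriv Lp (bf a)) α₀ :=
    (hLp.differentiable_deriv_two _).comp α₀ (hbf' α₀).differentiableAt
  have hu := hfdiff.hasDerivAt.div_of_eq_zero hf0 hpd (hp α₀)
  refine ⟨StrictAnti.strictMono_of_comp_eq (strictAnti_of_deriv_neg hLp')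
    (strictAnti_of_deriv_neg hLm') hbf, ?_, ?_, ?_⟩
  · simp [hderiv, hf0]
  · have hsmul : HasDerivAt
        (fun a => (cuspFunction Lm Lp bf a / deriv Lp (bf a)) • ((1 : ℝ), Lm a)) _ α₀ :=
      hu.smul ((hasDerivAt_const α₀ (1 : ℝ)).prodMk (hLmd α₀).hasDerivAt)
    rw [hderiv, hsmul.deriv]
    simp [hf0, hf'.ne, hp]
  · obtain ⟨ε, hε, hball⟩ := Metric.eventually_nhds_iff_ball.mp
      (eventually_nhdsWithin_iff.mp (hfdiff.hasDerivAt.eventually_ne hf'.ne))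
    refine ⟨ε, hε, fun a ha hne => ?_⟩
    rw [← Real.ball_eq_Ioo] at ha
    have hfa : cuspFunction Lm Lp bf a ≠ 0 := hf0 ▸ hball a ha hne
    simp [hderiv, hfa, hp]

/-- Lemma 2.7: (A) the singular curve `β = β(α)` is strictly increasing;
(B) `(α₀, β₀)` is a cusp point of `Π`, while the nearby singular points are fold points. -/
theorem singular_points_fold_and_cusp
    (Lm Lp : ℝ → ℝ) (hLm : ContDiff ℝ 2 Lm) (hLp : ContDiff ℝ 2 Lp)
    (α₀ β₀ : ℝ) (hαβ : α₀ < β₀)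
    -- (H1)
    (hord : ∀ x, Lm x < Lp x)
    -- (H2)
    (hLm' : ∀ x, deriv Lm x < 0) (hLp' : ∀ x, deriv Lp x < 0)
    -- (H3)
    (hLmα₀ : Lm α₀ = 0) (hLpβ₀ : Lp β₀ = 0)
    (bf : ℝ → ℝ) (hbf : ∀ a : ℝ, Lp (bf a) = Lm a) (hbfα₀ : bf α₀ = β₀)
    (f : ℝ → ℝ)
    (hf : ∀ a, f a = deriv Lm a / (Lp (bf a) - Lm (bf a))
        - deriv Lp (bf a) / (Lp a - Lm a))
    -- (H4)
    (hf0 : f α₀ = 0)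
    -- (H5)
    (hfdiff : DifferentiableAt ℝ f α₀) (hf' : deriv f α₀ < 0) :
    StrictMono bf ∧
    deriv (fun a => (tmap Lm Lp a (bf a), xmap Lm Lp a (bf a))) α₀ = 0 ∧
    deriv (deriv (fun a => (tmap Lm Lp a (bf a), xmap Lm Lp a (bf a)))) α₀ ≠ 0 ∧
    ∃ ε > 0, ∀ a ∈ Ioo (α₀ - ε) (α₀ + ε), a ≠ α₀ →
      deriv (fun a => (tmap Lm Lp a (bf a), xmap Lm Lp a (bf a))) a ≠ 0 :=
  singular_points_fold_and_cusp_general Lm Lp hLm hLp α₀ hord hLm' hLp' bf hbf f hf hf0 hfdiff hf'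
end

section
/- Let Λ₋, Λ₊ : ℝ → ℝ be C² functions and α₀ < β₀ satisfy assumptions (H1)–(H5), let β(α) := Λ₊⁻¹(Λ₋(α)), and define T(α) := ∫_α^{β(α)} dζ/(Λ₊(ζ) − Λ₋(ζ)) and t₀ := T(α₀) = ∫_{α₀}^{β₀} dζ/(Λ₊(ζ) − Λ₋(ζ)). Then there exists ε > 0 such that α₀ is the unique minimum point of T on (α₀ − ε, α₀ + ε): for every α ∈ (α₀ − ε, α₀ + ε) with α ≠ α₀ one has T(α) > t₀. -/
/-!
Write `T(α) = ∫_α^{β(α)} dζ/(Λ₊ − Λ₋)`. Since `Λ₊ ∘ β = Λ₋` with `Λ₊` strictly decreasing, `β` is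
continuous and differentiable with `β' = Λ₋'/Λ₊'(β)`, and differentiating the integral in both
endpoints gives `T' = f / Λ₊'(β)`. As `Λ₊' < 0` while `f` vanishes at `α₀` with `f'(α₀) < 0`,
near `α₀` the derivative `T'` has the sign of `α − α₀`: `T` strictly decreases up to `α₀` and
strictly increases after it, and `T(α₀) = t₀` because `β(α₀) = β₀`.
-/

open Set Filter Topology

theorem continuous_of_strictMono_comp {X : Type*} [TopologicalSpace X] {φ : ℝ → ℝ} {g ψ : X → ℝ}
    (hφ : StrictMono φ) (hφc : Continuous φ) (hψ : Continuous ψ) (h : φ ∘ g = ψ) :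
    Continuous g :=
  (hφ.isEmbedding_of_ordConnected (isPreconnected_range hφc).ordConnected).continuous_iff.2
    (h ▸ hψ)

theorem Continuous.hasDerivAt_integral_comp {h b : ℝ → ℝ} {b' a : ℝ} (hh : Continuous h)
    (hb : HasDerivAt b b' a) :
    HasDerivAt (fun x => ∫ ζ in x..b x, h ζ) (h (b a) * b' - h a) a := by
  have hF (u : ℝ) := (hh.integral_hasStrictDerivAt 0 u).hasDerivAt
  refine ((hF (b a)).comp a hb |>.sub (hF a)).congr_of_eventuallyEq (.of_forall fun x => ?_)
  exact (intervalIntegral.integral_interval_sub_left (hh.intervalIntegrable _ _)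
    (hh.intervalIntegrable _ _)).symm

theorem eventually_nhdsGT_lt_of_deriv_pos {f : ℝ → ℝ} {x₀ : ℝ} (hc : ContinuousAt f x₀)
    (hf : ∀ᶠ x in 𝓝[>] x₀, 0 < deriv f x) : ∀ᶠ x in 𝓝[>] x₀, f x₀ < f x := by
  obtain ⟨b, hb, hpos⟩ := (nhdsGT_basis x₀).eventually_iff.1 hf
  filter_upwards [Ioo_mem_nhdsGT hb] with x hx
  have hmono : StrictMonoOn f (Icc x₀ x) := by
    refine strictMonoOn_of_deriv_pos (convex_Icc _ _) (fun y hy => ?_) fun y hy => ?_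
    · rcases hy.1.eq_or_lt with rfl | hy₀
      · exact hc.continuousWithinAt
      · exact (differentiableAt_of_deriv_ne_zero
          (hpos ⟨hy₀, hy.2.trans_lt hx.2⟩).ne').continuousAt.continuousWithinAt
    · rw [interior_Icc] at hy
      exact hpos ⟨hy.1, hy.2.trans hx.2⟩
  exact hmono (left_mem_Icc.2 hx.1.le) (right_mem_Icc.2 hx.1.le) hx.1

theorem eventually_nhdsLT_lt_of_deriv_neg {f : ℝ → ℝ} {x₀ : ℝ} (hc : ContinuousAt f x₀)
    (hf : ∀ᶠ x in 𝓝[<] x₀, deriv f x < 0) : ∀ᶠ x in 𝓝[<] x₀, f x₀ < f x := by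
  obtain ⟨b, hb, hneg⟩ := (nhdsLT_basis x₀).eventually_iff.1 hf
  filter_upwards [Ioo_mem_nhdsLT hb] with x hx
  have hanti : StrictAntiOn f (Icc x x₀) := by
    refine strictAntiOn_of_deriv_neg (convex_Icc _ _) (fun y hy => ?_) fun y hy => ?_
    · rcases hy.2.eq_or_lt with rfl | hy₀
      · exact hc.continuousWithinAt
      · exact (differentiableAt_of_deriv_ne_zero
          (hneg ⟨hx.1.trans_le hy.1, hy₀⟩).ne).continuousAt.continuousWithinAt
    · rw [interior_Icc] at hy
      exact hneg ⟨hx.1.trans hy.1, hy.2⟩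
  exact hanti (left_mem_Icc.2 hx.2.le) (right_mem_Icc.2 hx.2.le) hx.2

theorem eventually_nhdsNE_lt_of_sign_deriv {f : ℝ → ℝ} {x₀ : ℝ} (hc : ContinuousAt f x₀)
    (hf : ∀ᶠ x in 𝓝[≠] x₀, SignType.sign (deriv f x) = SignType.sign (x - x₀)) :
    ∀ᶠ x in 𝓝[≠] x₀, f x₀ < f x := by
  rw [← nhdsLT_sup_nhdsGT, eventually_sup]
  exact ⟨eventually_nhdsLT_lt_of_deriv_neg hc (deriv_neg_left_of_sign_deriv hf),
    eventually_nhdsGT_lt_of_deriv_pos hc (deriv_pos_right_of_sign_deriv hf)⟩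

theorem hasDerivAt_of_comp_eq_of_deriv_neg {Lm Lp bf : ℝ → ℝ} (hLm : Differentiable ℝ Lm)
    (hLp' : ∀ x, deriv Lp x < 0) (hbf : ∀ a, Lp (bf a) = Lm a) (a : ℝ) :
    HasDerivAt bf (deriv Lm a / deriv Lp (bf a)) a := by
  have hLp : Differentiable ℝ Lp := fun x => differentiableAt_of_deriv_ne_zero (hLp' x).ne
  have hbf_cont : Continuous bf :=
    continuous_of_strictMono_comp (strictAnti_of_deriv_neg hLp').neg hLp.continuous.neg
      hLm.continuous.neg (funext fun a => congrArg Neg.neg (hbf a))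
  exact .of_comp_left hbf_cont.continuousAt (hLp _).hasDerivAt (hLm a).hasDerivAt (hLp' _).ne
    (.of_forall hbf)

theorem hasDerivAt_integral_inv_sub_of_comp_eq {Lm Lp bf : ℝ → ℝ} (hLm : Differentiable ℝ Lm)
    (hLp' : ∀ x, deriv Lp x < 0) (hord : ∀ x, Lm x < Lp x) (hbf : ∀ a, Lp (bf a) = Lm a)
    (a : ℝ) :
    HasDerivAt (fun x => ∫ ζ in x..bf x, 1 / (Lp ζ - Lm ζ))
      ((deriv Lm a / (Lp (bf a) - Lm (bf a)) - deriv Lp (bf a) / (Lp a - Lm a))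
        / deriv Lp (bf a)) a := by
  have hLp : Differentiable ℝ Lp := fun x => differentiableAt_of_deriv_ne_zero (hLp' x).ne
  have hgap (x : ℝ) : Lp x - Lm x ≠ 0 := (sub_pos.2 (hord x)).ne'
  have hcont : Continuous fun ζ => 1 / (Lp ζ - Lm ζ) :=
    continuous_const.div (hLp.continuous.sub hLm.continuous) hgap
  refine (hcont.hasDerivAt_integral_comp
    (hasDerivAt_of_comp_eq_of_deriv_neg hLm hLp' hbf a)).congr_deriv ?_
  have hslope : deriv Lp (bf a) ≠ 0 := (hLp' (bf a)).ne
  field_simp [hgap, hslope]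

theorem alpha₀_unique_minimum_of_intersection_time_general
    (Lm Lp : ℝ → ℝ)
    (α₀ β₀ : ℝ)
    -- (H1)
    (hord : ∀ x, Lm x < Lp x)
    -- (H2)
    (hLm' : ∀ x, deriv Lm x < 0) (hLp' : ∀ x, deriv Lp x < 0)
    (bf : ℝ → ℝ) (hbf : ∀ a : ℝ, Lp (bf a) = Lm a) (hbfα₀ : bf α₀ = β₀)
    (f : ℝ → ℝ)
    (hf : ∀ a, f a = deriv Lm a / (Lp (bf a) - Lm (bf a))
        - deriv Lp (bf a) / (Lp a - Lm a))
    -- (H4)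
    (hf0 : f α₀ = 0)
    -- (H5)
    (hf' : deriv f α₀ < 0)
    (t₀ : ℝ) (ht₀ : t₀ = ∫ ζ in α₀..β₀, 1 / (Lp ζ - Lm ζ)) :
    ∃ ε > 0, ∀ a ∈ Ioo (α₀ - ε) (α₀ + ε), a ≠ α₀ →
      (∫ ζ in a..(bf a), 1 / (Lp ζ - Lm ζ)) > t₀ := by
  have hLm : Differentiable ℝ Lm := fun x => differentiableAt_of_deriv_ne_zero (hLm' x).ne
  set T : ℝ → ℝ := fun a => ∫ ζ in a..bf a, 1 / (Lp ζ - Lm ζ)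
  have hT (a : ℝ) : HasDerivAt T (f a / deriv Lp (bf a)) a :=
    hf a ▸ hasDerivAt_integral_inv_sub_of_comp_eq hLm hLp' hord hbf a
  have hsign : ∀ᶠ x in 𝓝[≠] α₀, SignType.sign (deriv T x) = SignType.sign (x - α₀) := by
    refine nhdsWithin_le_nhds <|
      (eventually_nhdsWithin_sign_eq_of_deriv_neg hf' hf0).mono fun x hx => ?_
    rw [(hT x).deriv, div_eq_mul_inv, sign_mul, hx, sign_neg (inv_lt_zero.2 (hLp' (bf x))),
      ← neg_sub, Left.sign_neg]
    simp
  obtain ⟨ε, hε, hmin⟩ := Metric.eventually_nhds_iff_ball.1 <| eventually_nhdsWithin_iff.1 <|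
    eventually_nhdsNE_lt_of_sign_deriv (hT α₀).continuousAt hsign
  refine ⟨ε, hε, fun a ha hne => ?_⟩
  rw [Real.ball_eq_Ioo] at hmin
  simpa [T, hbfα₀, ht₀] using hmin a ha hne

/-- Lemma 2.8: under (H1)–(H5), `α₀` is the unique minimum point of the intersection-time
function `T(α) = ∫_α^{β(α)} dζ/(Λ₊(ζ) − Λ₋(ζ))` on a small interval around `α₀`. -/
theorem alpha₀_unique_minimum_of_intersection_time
    (Lm Lp : ℝ → ℝ) (hLm : ContDiff ℝ 2 Lm) (hLp : ContDiff ℝ 2 Lp)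
    (α₀ β₀ : ℝ) (hαβ : α₀ < β₀)
    -- (H1)
    (hord : ∀ x, Lm x < Lp x)
    -- (H2)
    (hLm' : ∀ x, deriv Lm x < 0) (hLp' : ∀ x, deriv Lp x < 0)
    -- (H3)
    (hLmα₀ : Lm α₀ = 0) (hLpβ₀ : Lp β₀ = 0)
    (bf : ℝ → ℝ) (hbf : ∀ a : ℝ, Lp (bf a) = Lm a) (hbfα₀ : bf α₀ = β₀)
    (f : ℝ → ℝ)
    (hf : ∀ a, f a = deriv Lm a / (Lp (bf a) - Lm (bf a))
        - deriv Lp (bf a) / (Lp a - Lm a))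
    -- (H4)
    (hf0 : f α₀ = 0)
    -- (H5)
    (hfdiff : DifferentiableAt ℝ f α₀) (hf' : deriv f α₀ < 0)
    (t₀ : ℝ) (ht₀ : t₀ = ∫ ζ in α₀..β₀, 1 / (Lp ζ - Lm ζ)) :
    ∃ ε > 0, ∀ a ∈ Ioo (α₀ - ε) (α₀ + ε), a ≠ α₀ →
      (∫ ζ in a..(bf a), 1 / (Lp ζ - Lm ζ)) > t₀ :=
  alpha₀_unique_minimum_of_intersection_time_general Lm Lp α₀ β₀ hord hLm' hLp' bf hbf hbfα₀ f hf
    hf0 hf' t₀ ht₀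
end

section
/- Let Λ₋, Λ₊ : ℝ → ℝ be C² functions and α₀ < β₀ satisfy assumptions (H1)–(H5), let β(α) := Λ₊⁻¹(Λ₋(α)), and define the curve γ(α) := (t(α,β(α)), x(α,β(α))) where t(α,β) = ∫_α^β dζ/(Λ₊(ζ) − Λ₋(ζ)) and x(α,β) = ½[α + β + ∫_α^β (Λ₊(ζ) + Λ₋(ζ))/(Λ₊(ζ) − Λ₋(ζ)) dζ]. Then there exists ε > 0 such that the images Γ_l := γ((α₀ − ε, α₀)) and Γ_r := γ((α₀, α₀ + ε)) together with the point (t₀,x₀) = γ(α₀) form the graph of a function t = T(x) of the second coordinate; moreover T is strictly increasing and concave on the x-projection of Γ_l, and strictly decreasing and concave on the x-projection of Γ_r. -/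
/-!
Differentiating the integrals along the singular curve and using `Λ₊(β(α)) = Λ₋(α)` gives
`t' = f(α) / Λ₊'(β(α))` and `x' = Λ₋(α) t'`, so the curve has slope `dt/dx = 1/Λ₋(α)`.
By (H4)–(H5) `f` changes sign from `+` to `-` at `α₀`, and by (H2)–(H3) so does `Λ₋`; hence
`x' < 0` off `α₀`, `x` is strictly decreasing near `α₀` and the curve is a graph `t = T(x)`.
By Cauchy's mean value theorem the secant slopes of `T` are values of `1/Λ₋` at intermediate
parameters. On each side of `α₀` these have a fixed sign, and they decrease as `x` increases
(i.e. as `α` decreases) because `Λ₋` is decreasing: this is the concavity.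
-/

open Set Filter Topology

theorem StrictAnti.continuousAt_of_comp_eq {α β γ : Type*} [LinearOrder α] [TopologicalSpace α]
    [OrderTopology α] [LinearOrder β] [TopologicalSpace β] [OrderTopology β] [TopologicalSpace γ]
    {g : α → β} {h : γ → β} {b : γ → α} {a : γ} (hg : StrictAnti g) (hh : ContinuousAt h a)
    (hgb : ∀ x, g (b x) = h x) : ContinuousAt b a := by
  rw [ContinuousAt, tendsto_order]
  refine ⟨fun u hu => ?_, fun v hv => ?_⟩
  · have : h a < g u := hgb a ▸ hg hu
    filter_upwards [hh.eventually (gt_mem_nhds this)] with x hx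
    exact hg.lt_iff_gt.mp (by rwa [hgb x])
  · have : g v < h a := hgb a ▸ hg hv
    filter_upwards [hh.eventually (lt_mem_nhds this)] with x hx
    exact hg.lt_iff_gt.mp (by rwa [hgb x])

theorem HasStrictDerivAt.hasDerivAt_of_comp_eq_s12 {g h b : ℝ → ℝ} {g' h' a : ℝ}
    (hg : HasStrictDerivAt g g' (b a)) (hg' : g' ≠ 0) (hh : HasDerivAt h h' a)
    (hb : ContinuousAt b a) (hgb : ∀ x, g (b x) = h x) : HasDerivAt b (g'⁻¹ * h') a := by
  have hinv := hg.to_localInverse hg'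
  rw [hgb a] at hinv
  refine (hinv.hasDerivAt.comp a hh).congr_of_eventuallyEq ?_
  filter_upwards [hb.eventually (hg.hasStrictFDerivAt_equiv hg').eventually_left_inverse]
    with x hx
  rw [hgb x] at hx
  exact hx.symm

theorem Continuous.hasDerivAt_intervalIntegral_comp {E : Type*} [NormedAddCommGroup E]
    [NormedSpace ℝ E] [CompleteSpace E] {φ : ℝ → E} {b : ℝ → ℝ} {b' a : ℝ} (hφ : Continuous φ)
    (hb : HasDerivAt b b' a) :
    HasDerivAt (fun x => ∫ ζ in x..b x, φ ζ) (b' • φ (b a) - φ a) a := by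
  have hF := fun y => (hφ.integral_hasStrictDerivAt 0 y).hasDerivAt
  refine (((hF (b a)).scomp a hb).sub (hF a)).congr_of_eventuallyEq (.of_forall fun x => ?_)
  exact (intervalIntegral.integral_interval_sub_left (hφ.intervalIntegrable _ _)
    (hφ.intervalIntegrable _ _)).symm

theorem exists_pos_left_neg_right_of_deriv_neg {f : ℝ → ℝ} {x₀ : ℝ} (hf0 : f x₀ = 0)
    (hf' : deriv f x₀ < 0) :
    ∃ ε > 0, (∀ x ∈ Ioo (x₀ - ε) x₀, 0 < f x) ∧ ∀ x ∈ Ioo x₀ (x₀ + ε), f x < 0 := by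
  obtain ⟨ε, hε, hsign⟩ :=
    Metric.eventually_nhds_iff.mp (eventually_nhdsWithin_sign_eq_of_deriv_neg hf' hf0)
  have hdist {x} (hx : x ∈ Ioo (x₀ - ε) (x₀ + ε)) : dist x x₀ < ε := by
    rw [Real.dist_eq, abs_sub_lt_iff]; constructor <;> linarith [hx.1, hx.2]
  refine ⟨ε, hε, fun x hx => ?_, fun x hx => ?_⟩
  · have := hsign (hdist ⟨hx.1, by linarith [hx.2]⟩)
    rwa [sign_pos (sub_pos.2 hx.2), sign_eq_one_iff] at this
  · have := hsign (hdist ⟨by linarith [hx.1], hx.2⟩)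
    rwa [sign_neg (sub_neg.2 hx.1), sign_eq_neg_one_iff] at this

theorem strictAntiOn_Ioo_of_hasDerivAt_neg_of_ne {X X' : ℝ → ℝ} {p q x₀ : ℝ}
    (hx₀ : x₀ ∈ Ioo p q) (hX : ∀ a ∈ Ioo p q, HasDerivAt X (X' a) a)
    (hX' : ∀ a ∈ Ioo p q, a ≠ x₀ → X' a < 0) : StrictAntiOn X (Ioo p q) := by
  have hc : ContinuousOn X (Ioo p q) := fun a ha => (hX a ha).continuousAt.continuousWithinAt
  rw [← Ioc_union_Ico_eq_Ioo hx₀.1 hx₀.2]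
  refine StrictAntiOn.union ?_ ?_ (isGreatest_Ioc hx₀.1) (isLeast_Ico hx₀.2)
  · refine strictAntiOn_of_deriv_neg (convex_Ioc _ _)
      (hc.mono (Ioc_subset_Ioo_right hx₀.2)) fun a ha => ?_
    rw [interior_Ioc] at ha
    have ha' : a ∈ Ioo p q := ⟨ha.1, ha.2.trans hx₀.2⟩
    rw [(hX a ha').deriv]
    exact hX' a ha' ha.2.ne
  · refine strictAntiOn_of_deriv_neg (convex_Ico _ _)
      (hc.mono (Ico_subset_Ioo_left hx₀.1)) fun a ha => ?_
    rw [interior_Ico] at ha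
    have ha' : a ∈ Ioo p q := ⟨hx₀.1.trans ha.1, ha.2⟩
    rw [(hX a ha').deriv]
    exact hX' a ha' ha.1.ne'

section Characteristic

variable {Lm Lp b : ℝ → ℝ} {b' a : ℝ}

theorem hasDerivAt_tmap_comp (hLm : Continuous Lm) (hLp : Continuous Lp)
    (hne : ∀ x, Lp x ≠ Lm x) (hb : HasDerivAt b b' a) :
    HasDerivAt (fun x => tmap Lm Lp x (b x))
      (b' / (Lp (b a) - Lm (b a)) - 1 / (Lp a - Lm a)) a := by
  have hφ : Continuous fun ζ => 1 / (Lp ζ - Lm ζ) :=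
    continuous_const.div (hLp.sub hLm) fun x => sub_ne_zero.2 (hne x)
  refine (hφ.hasDerivAt_intervalIntegral_comp hb).congr_deriv ?_
  rw [smul_eq_mul, mul_one_div]

theorem hasDerivAt_xmap_comp (hLm : Continuous Lm) (hLp : Continuous Lp)
    (hne : ∀ x, Lp x ≠ Lm x) (hb : HasDerivAt b b' a) (hba : Lp (b a) = Lm a) :
    HasDerivAt (fun x => xmap Lm Lp x (b x))
      (Lm a * (b' / (Lp (b a) - Lm (b a)) - 1 / (Lp a - Lm a))) a := by
  have hφ : Continuous fun ζ => (Lp ζ + Lm ζ) / (Lp ζ - Lm ζ) :=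
    (hLp.add hLm).div (hLp.sub hLm) fun x => sub_ne_zero.2 (hne x)
  refine (((hasDerivAt_id a).add hb).add
    (hφ.hasDerivAt_intervalIntegral_comp hb)).div_const 2 |>.congr_deriv ?_
  have h₁ := sub_ne_zero.2 (hne a)
  have h₂ := sub_ne_zero.2 (hne (b a))
  rw [hba] at h₂ ⊢
  rw [smul_eq_mul]
  field_simp
  ring

end Characteristic

section SecantSlopes

variable {T X s : ℝ → ℝ} {J : Set ℝ}

/-- Mean-value form of `dT/dX = s` along the parametrised curve `a ↦ (X a, T (X a))`. -/
def HasSecantSlopesOn (T X s : ℝ → ℝ) (J : Set ℝ) : Prop :=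
  ∀ a ∈ J, ∀ b ∈ J, a < b → ∃ c ∈ Ioo a b, T (X b) - T (X a) = s c * (X b - X a)

theorem hasSecantSlopesOn_inv_of_hasDerivAt {t L t' : ℝ → ℝ} (hJ : J.OrdConnected)
    (hX : ∀ a ∈ J, HasDerivAt X (L a * t' a) a) (ht : ∀ a ∈ J, HasDerivAt t (t' a) a)
    (hL : ∀ a ∈ J, L a ≠ 0) (ht' : ∀ a ∈ J, t' a ≠ 0) (hT : ∀ a ∈ J, T (X a) = t a) :
    HasSecantSlopesOn T X (fun a => (L a)⁻¹) J := by
  intro a ha b hb hab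
  have hsub : Icc a b ⊆ J := hJ.out ha hb
  have hcont {F F' : ℝ → ℝ} (hF : ∀ a ∈ J, HasDerivAt F (F' a) a) : ContinuousOn F (Icc a b) :=
    fun x hx => (hF x (hsub hx)).continuousAt.continuousWithinAt
  obtain ⟨c, hc, hcauchy⟩ := exists_ratio_hasDerivAt_eq_ratio_slope X _ hab (hcont hX)
    (fun x hx => hX x (hsub (Ioo_subset_Icc_self hx))) t t' (hcont ht)
    (fun x hx => ht x (hsub (Ioo_subset_Icc_self hx)))
  have hcJ : c ∈ J := hsub (Ioo_subset_Icc_self hc)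
  refine ⟨c, hc, ?_⟩
  rw [hT b hb, hT a ha, eq_inv_mul_iff_mul_eq₀ (hL c hcJ)]
  exact mul_right_cancel₀ (ht' c hcJ) (by linear_combination hcauchy)

theorem HasSecantSlopesOn.strictMonoOn (h : HasSecantSlopesOn T X s J) (hJ : J.OrdConnected)
    (hs : ∀ a ∈ J, 0 < s a) : StrictMonoOn T (X '' J) := by
  rintro _ ⟨a, ha, rfl⟩ _ ⟨b, hb, rfl⟩ hlt
  rcases lt_trichotomy a b with hab | rfl | hba
  · obtain ⟨c, hc, hslope⟩ := h a ha b hb hab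
    have := mul_pos (hs c (hJ.out ha hb (Ioo_subset_Icc_self hc))) (sub_pos.2 hlt)
    linarith
  · exact absurd hlt (lt_irrefl _)
  · obtain ⟨c, hc, hslope⟩ := h b hb a ha hba
    have := mul_neg_of_pos_of_neg (hs c (hJ.out hb ha (Ioo_subset_Icc_self hc))) (sub_neg.2 hlt)
    linarith

theorem HasSecantSlopesOn.strictAntiOn (h : HasSecantSlopesOn T X s J) (hJ : J.OrdConnected)
    (hs : ∀ a ∈ J, s a < 0) : StrictAntiOn T (X '' J) := by
  rintro _ ⟨a, ha, rfl⟩ _ ⟨b, hb, rfl⟩ hlt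
  rcases lt_trichotomy a b with hab | rfl | hba
  · obtain ⟨c, hc, hslope⟩ := h a ha b hb hab
    have := mul_neg_of_neg_of_pos (hs c (hJ.out ha hb (Ioo_subset_Icc_self hc))) (sub_pos.2 hlt)
    linarith
  · exact absurd hlt (lt_irrefl _)
  · obtain ⟨c, hc, hslope⟩ := h b hb a ha hba
    have := mul_pos_of_neg_of_neg (hs c (hJ.out hb ha (Ioo_subset_Icc_self hc))) (sub_neg.2 hlt)
    linarith

theorem HasSecantSlopesOn.concaveOn (h : HasSecantSlopesOn T X s J) (hJ : J.OrdConnected)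
    (hXc : ContinuousOn X J) (hX : StrictAntiOn X J) (hs : MonotoneOn s J) :
    ConcaveOn ℝ (X '' J) T := by
  have hconv : (X '' J).OrdConnected := (hJ.isPreconnected.image X hXc).ordConnected
  refine concaveOn_of_slope_anti_adjacent hconv.convex ?_
  rintro _ y _ ⟨a, ha, rfl⟩ ⟨c, hc, rfl⟩ hxy hyz
  obtain ⟨b, hb, rfl⟩ := hconv.out ⟨a, ha, rfl⟩ ⟨c, hc, rfl⟩ ⟨hxy.le, hyz.le⟩
  obtain ⟨d₁, hd₁, h₁⟩ := h b hb a ha ((hX.lt_iff_gt ha hb).1 hxy)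
  obtain ⟨d₂, hd₂, h₂⟩ := h c hc b hb ((hX.lt_iff_gt hb hc).1 hyz)
  have e₁ : (T (X b) - T (X a)) / (X b - X a) = s d₁ := by
    rw [div_eq_iff (sub_ne_zero.2 hxy.ne')]; linarith
  have e₂ : (T (X c) - T (X b)) / (X c - X b) = s d₂ := by
    rw [div_eq_iff (sub_ne_zero.2 hyz.ne')]; linarith
  rw [e₁, e₂]
  exact hs (hJ.out hc hb (Ioo_subset_Icc_self hd₂)) (hJ.out hb ha (Ioo_subset_Icc_self hd₁))
    (hd₂.2.trans hd₁.1).le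

theorem strictMonoOn_image_and_concaveOn_of_pos {t L t' : ℝ → ℝ} (hJ : J.OrdConnected)
    (hX : ∀ a ∈ J, HasDerivAt X (L a * t' a) a) (ht : ∀ a ∈ J, HasDerivAt t (t' a) a)
    (hT : ∀ a ∈ J, T (X a) = t a) (hXanti : StrictAntiOn X J) (hL : AntitoneOn L J)
    (hL0 : ∀ a ∈ J, 0 < L a) (ht' : ∀ a ∈ J, t' a ≠ 0) :
    StrictMonoOn T (X '' J) ∧ ConcaveOn ℝ (X '' J) T := by
  have h := hasSecantSlopesOn_inv_of_hasDerivAt hJ hX ht (fun a ha => (hL0 a ha).ne') ht' hT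
  refine ⟨h.strictMonoOn hJ fun a ha => inv_pos.2 (hL0 a ha), h.concaveOn hJ
    (fun a ha => (hX a ha).continuousAt.continuousWithinAt) hXanti ?_⟩
  exact fun a ha b hb hab => inv_anti₀ (hL0 b hb) (hL ha hb hab)

theorem strictAntiOn_image_and_concaveOn_of_neg {t L t' : ℝ → ℝ} (hJ : J.OrdConnected)
    (hX : ∀ a ∈ J, HasDerivAt X (L a * t' a) a) (ht : ∀ a ∈ J, HasDerivAt t (t' a) a)
    (hT : ∀ a ∈ J, T (X a) = t a) (hXanti : StrictAntiOn X J) (hL : AntitoneOn L J)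
    (hL0 : ∀ a ∈ J, L a < 0) (ht' : ∀ a ∈ J, t' a ≠ 0) :
    StrictAntiOn T (X '' J) ∧ ConcaveOn ℝ (X '' J) T := by
  have h := hasSecantSlopesOn_inv_of_hasDerivAt hJ hX ht (fun a ha => (hL0 a ha).ne) ht' hT
  refine ⟨h.strictAntiOn hJ fun a ha => inv_lt_zero.2 (hL0 a ha), h.concaveOn hJ
    (fun a ha => (hX a ha).continuousAt.continuousWithinAt) hXanti ?_⟩
  exact fun a ha b hb hab => (inv_le_inv_of_neg (hL0 a ha) (hL0 b hb)).2 (hL ha hb hab)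

end SecantSlopes

theorem hasDerivAt_tmap_and_xmap_of_comp_eq {Lm Lp b : ℝ → ℝ} (hLm : Differentiable ℝ Lm)
    (hLp : ContDiff ℝ 1 Lp) (hne : ∀ x, Lp x ≠ Lm x) (hLp' : ∀ x, deriv Lp x < 0)
    (hb : ∀ a, Lp (b a) = Lm a) (a : ℝ) :
    let τ := (deriv Lm a / (Lp (b a) - Lm (b a)) - deriv Lp (b a) / (Lp a - Lm a)) / deriv Lp (b a)
    HasDerivAt (fun x => tmap Lm Lp x (b x)) τ a ∧
      HasDerivAt (fun x => xmap Lm Lp x (b x)) (Lm a * τ) a := by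
  have hb' : HasDerivAt b ((deriv Lp (b a))⁻¹ * deriv Lm a) a :=
    (hLp.contDiffAt.hasStrictDerivAt one_ne_zero).hasDerivAt_of_comp_eq_s12 (hLp' _).ne
      (hLm a).hasDerivAt
      ((strictAnti_of_deriv_neg hLp').continuousAt_of_comp_eq hLm.continuous.continuousAt hb) hb
  have hτ : (deriv Lp (b a))⁻¹ * deriv Lm a / (Lp (b a) - Lm (b a)) - 1 / (Lp a - Lm a) =
      (deriv Lm a / (Lp (b a) - Lm (b a)) - deriv Lp (b a) / (Lp a - Lm a)) / deriv Lp (b a) := by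
    have := sub_ne_zero.2 (hne a)
    have := sub_ne_zero.2 (hne (b a))
    have := (hLp' (b a)).ne
    field_simp
  have hc := hLp.continuous
  exact ⟨hτ ▸ hasDerivAt_tmap_comp hLm.continuous hc hne hb',
    hτ ▸ hasDerivAt_xmap_comp hLm.continuous hc hne hb' (hb a)⟩

theorem envelope_is_concave_graph_general
    (Lm Lp : ℝ → ℝ) (hLm : ContDiff ℝ 2 Lm) (hLp : ContDiff ℝ 2 Lp)
    (α₀ : ℝ)
    -- (H1)
    (hord : ∀ x, Lm x < Lp x)
    -- (H2)
    (hLm' : ∀ x, deriv Lm x < 0) (hLp' : ∀ x, deriv Lp x < 0)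
    -- (H3)
    (hLmα₀ : Lm α₀ = 0)
    (bf : ℝ → ℝ) (hbf : ∀ a : ℝ, Lp (bf a) = Lm a)
    (f : ℝ → ℝ)
    (hf : ∀ a, f a = deriv Lm a / (Lp (bf a) - Lm (bf a))
        - deriv Lp (bf a) / (Lp a - Lm a))
    -- (H4)
    (hf0 : f α₀ = 0)
    -- (H5)
    (hf' : deriv f α₀ < 0) :
    ∃ ε > 0, ∃ Tfun : ℝ → ℝ,
      -- the curve α ↦ (t(α,β(α)), x(α,β(α))) is the graph of the function t = Tfun x
      (∀ a ∈ Ioo (α₀ - ε) (α₀ + ε),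
        Tfun (xmap Lm Lp a (bf a)) = tmap Lm Lp a (bf a)) ∧
      -- increasing and concave over the x-projection of Γ_l
      StrictMonoOn Tfun ((fun a => xmap Lm Lp a (bf a)) '' Ioo (α₀ - ε) α₀) ∧
      ConcaveOn ℝ ((fun a => xmap Lm Lp a (bf a)) '' Ioo (α₀ - ε) α₀) Tfun ∧
      -- decreasing and concave over the x-projection of Γ_r
      StrictAntiOn Tfun ((fun a => xmap Lm Lp a (bf a)) '' Ioo α₀ (α₀ + ε)) ∧
      ConcaveOn ℝ ((fun a => xmap Lm Lp a (bf a)) '' Ioo α₀ (α₀ + ε)) Tfun := by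
  set X := fun a => xmap Lm Lp a (bf a)
  set t := fun a => tmap Lm Lp a (bf a)
  set τ := fun a => f a / deriv Lp (bf a)
  have hder (a : ℝ) : HasDerivAt t (τ a) a ∧ HasDerivAt X (Lm a * τ a) a := by
    simpa only [τ, hf a] using hasDerivAt_tmap_and_xmap_of_comp_eq
      (hLm.differentiable two_ne_zero) (hLp.of_le one_le_two) (fun x => (hord x).ne') hLp' hbf a
  obtain ⟨ε, hε, hfpos, hfneg⟩ := exists_pos_left_neg_right_of_deriv_neg hf0 hf'
  have hLmanti : StrictAnti Lm := strictAnti_of_deriv_neg hLm'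
  have hleft (a) (ha : a ∈ Ioo (α₀ - ε) α₀) : 0 < Lm a ∧ τ a < 0 :=
    ⟨hLmα₀ ▸ hLmanti ha.2, div_neg_of_pos_of_neg (hfpos a ha) (hLp' _)⟩
  have hright (a) (ha : a ∈ Ioo α₀ (α₀ + ε)) : Lm a < 0 ∧ 0 < τ a :=
    ⟨hLmα₀ ▸ hLmanti ha.1, div_pos_of_neg_of_neg (hfneg a ha) (hLp' _)⟩
  set I := Ioo (α₀ - ε) (α₀ + ε)
  have hXanti : StrictAntiOn X I := by
    refine strictAntiOn_Ioo_of_hasDerivAt_neg_of_ne ⟨sub_lt_self _ hε, lt_add_of_pos_right _ hε⟩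
      (fun a _ => (hder a).2) fun a ha hne => ?_
    rcases hne.lt_or_gt with h | h
    · exact mul_neg_of_pos_of_neg (hleft a ⟨ha.1, h⟩).1 (hleft a ⟨ha.1, h⟩).2
    · exact mul_neg_of_neg_of_pos (hright a ⟨h, ha.2⟩).1 (hright a ⟨h, ha.2⟩).2
  have hgraph (a) (ha : a ∈ I) : (t ∘ Function.invFunOn X I) (X a) = t a :=
    congrArg t (hXanti.injOn.leftInvOn_invFunOn ha)
  have hIl : Ioo (α₀ - ε) α₀ ⊆ I := Ioo_subset_Ioo_right (le_add_of_nonneg_right hε.le)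
  have hIr : Ioo α₀ (α₀ + ε) ⊆ I := Ioo_subset_Ioo_left (sub_le_self _ hε.le)
  obtain ⟨hmonoL, hconcL⟩ := strictMonoOn_image_and_concaveOn_of_pos ordConnected_Ioo
    (fun a _ => (hder a).2) (fun a _ => (hder a).1) (fun a ha => hgraph a (hIl ha))
    (hXanti.mono hIl) (hLmanti.antitone.antitoneOn _) (fun a ha => (hleft a ha).1)
    fun a ha => (hleft a ha).2.ne
  obtain ⟨hantiR, hconcR⟩ := strictAntiOn_image_and_concaveOn_of_neg ordConnected_Ioo
    (fun a _ => (hder a).2) (fun a _ => (hder a).1) (fun a ha => hgraph a (hIr ha))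
    (hXanti.mono hIr) (hLmanti.antitone.antitoneOn _) (fun a ha => (hright a ha).1)
    fun a ha => (hright a ha).2.ne'
  exact ⟨ε, hε, t ∘ Function.invFunOn X I, hgraph, hmonoL, hconcL, hantiR, hconcR⟩

/-- Lemma 2.9: `Γ_l` and `Γ_r` (the images under `Π` of the singular curve on either side
of `α₀`), together with the cusp `(t₀,x₀)`, form the graph of a function `t = T(x)`,
with `T` strictly increasing and concave on the `x`-projection of `Γ_l` and strictly
decreasing and concave on the `x`-projection of `Γ_r`. -/
theorem envelope_is_concave_graph
    (Lm Lp : ℝ → ℝ) (hLm : ContDiff ℝ 2 Lm) (hLp : ContDiff ℝ 2 Lp)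
    (α₀ β₀ : ℝ) (hαβ : α₀ < β₀)
    -- (H1)
    (hord : ∀ x, Lm x < Lp x)
    -- (H2)
    (hLm' : ∀ x, deriv Lm x < 0) (hLp' : ∀ x, deriv Lp x < 0)
    -- (H3)
    (hLmα₀ : Lm α₀ = 0) (hLpβ₀ : Lp β₀ = 0)
    (bf : ℝ → ℝ) (hbf : ∀ a : ℝ, Lp (bf a) = Lm a) (hbfα₀ : bf α₀ = β₀)
    (f : ℝ → ℝ)
    (hf : ∀ a, f a = deriv Lm a / (Lp (bf a) - Lm (bf a))
        - deriv Lp (bf a) / (Lp a - Lm a))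
    -- (H4)
    (hf0 : f α₀ = 0)
    -- (H5)
    (hfdiff : DifferentiableAt ℝ f α₀) (hf' : deriv f α₀ < 0) :
    ∃ ε > 0, ∃ Tfun : ℝ → ℝ,
      -- the curve α ↦ (t(α,β(α)), x(α,β(α))) is the graph of the function t = Tfun x
      (∀ a ∈ Ioo (α₀ - ε) (α₀ + ε),
        Tfun (xmap Lm Lp a (bf a)) = tmap Lm Lp a (bf a)) ∧
      -- increasing and concave over the x-projection of Γ_l
      StrictMonoOn Tfun ((fun a => xmap Lm Lp a (bf a)) '' Ioo (α₀ - ε) α₀) ∧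
      ConcaveOn ℝ ((fun a => xmap Lm Lp a (bf a)) '' Ioo (α₀ - ε) α₀) Tfun ∧
      -- decreasing and concave over the x-projection of Γ_r
      StrictAntiOn Tfun ((fun a => xmap Lm Lp a (bf a)) '' Ioo α₀ (α₀ + ε)) ∧
      ConcaveOn ℝ ((fun a => xmap Lm Lp a (bf a)) '' Ioo α₀ (α₀ + ε)) Tfun :=
  envelope_is_concave_graph_general Lm Lp hLm hLp α₀ hord hLm' hLp' hLmα₀ bf hbf f hf hf0 hf'
end
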